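/- arXiv:2510.12706 — 8 statements merged into one kernel-verified Lean document; each statement's English description precedes it below -/
import Mathlib

section
/- Let n ≥ 1 and let λ : {1,…,n} → ℤ. Then the following are equivalent: (a) there exist η : {1,…,n} → ℤ and a permutation w of {1,…,n} with w² = id such that λ_i = η_i + η_{w(i)} for all i; (b) for every odd integer m, the number of indices i with λ_i = m is even. -/
/-!
If `λ = η + w(η)` with `w` an involution, then `λ` is `w`-invariant and `λ_i = 2 η_i` at every
fixed point of `w`. So `w` preserves each fibre `λ⁻¹(m)` and has no fixed point on it when `m`
is odd: it pairs off the elements of the odd fibres, which therefore have even size.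

Conversely, if the odd fibres have even size, choose a fixed-point-free involution on each of
them and the identity on the even fibres. For every 2-cycle `i < w i` put `η_i = 0` and
`η_{w i} = λ_i`, and at a fixed point `i` let `η_i` be half of the even number `λ_i`.
-/

open Equiv Finset

namespace Equiv.Perm

variable {α : Type*}

theorem apply_apply_of_mul_self_eq_one {w : Perm α} (hw : w * w = 1) (a : α) : w (w a) = a :=
  DFunLike.congr_fun hw a

theorem even_card_of_mul_self_eq_one [Fintype α] [DecidableEq α] {σ : Perm α}
    (hσ : σ * σ = 1) (h : ∀ a, σ a ≠ a) : Even (Fintype.card α) := by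
  have hsupp : σ.support = univ := eq_univ_of_forall fun a => mem_support.2 (h a)
  rw [even_iff_two_dvd, ← card_univ, ← hsupp]
  exact two_dvd_card_support (by rw [sq, hσ])

theorem exists_mul_self_eq_one_of_even_card [Fintype α] (h : Even (Fintype.card α)) :
    ∃ σ : Perm α, σ * σ = 1 ∧ ∀ a, σ a ≠ a := by
  obtain ⟨k, hk⟩ := h
  let e : Fin k ⊕ Fin k ≃ α := finSumFinEquiv.trans (Fintype.equivFinOfCardEq hk).symm
  refine ⟨e.permCongr (sumComm _ _), ?_, fun a => ?_⟩
  · rw [← permCongr_mul]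
    ext a
    simp
  · obtain ⟨x, rfl⟩ := e.surjective a
    cases x <;> simp [permCongr_apply]

theorem even_card_fiber_of_mul_self_eq_one {β : Type*} [Fintype α] [DecidableEq α]
    [DecidableEq β] (f : α → β) {w : Perm α} (hw : w * w = 1) (hf : ∀ a, f (w a) = f a)
    {b : β} (hb : ∀ a, f a = b → w a ≠ a) : Even (Fintype.card {a // f a = b}) := by
  refine even_card_of_mul_self_eq_one (σ := w.subtypePerm fun a => by rw [hf]) ?_
    fun a hfix => hb a a.2 (congrArg Subtype.val hfix)
  ext a
  exact apply_apply_of_mul_self_eq_one hw a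

theorem exists_mul_self_eq_one_of_even_card_fiber {β : Type*} [Fintype α] [DecidableEq β]
    (f : α → β) (p : β → Prop) (h : ∀ b, p b → Even (Fintype.card {a // f a = b})) :
    ∃ w : Perm α, w * w = 1 ∧ (∀ a, f (w a) = f a) ∧ ∀ a, p (f a) → w a ≠ a := by
  have hfiber : ∀ b, ∃ σ : Perm {a // f a = b}, σ * σ = 1 ∧ (p b → ∀ x, σ x ≠ x) := by
    intro b
    by_cases hb : p b
    · obtain ⟨σ, hσ, hfree⟩ := exists_mul_self_eq_one_of_even_card (h b hb)
      exact ⟨σ, hσ, fun _ => hfree⟩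
    · exact ⟨1, one_mul 1, fun hb' => absurd hb' hb⟩
  choose σ hσ hfree using hfiber
  refine ⟨(sigmaFiberEquiv f).permCongr (sigmaCongrRight σ), ?_,
    fun a => (σ (f a) ⟨a, rfl⟩).2, fun a ha hfix => hfree _ ha ⟨a, rfl⟩ (Subtype.ext hfix)⟩
  rw [← permCongr_mul, sigmaCongrRight_mul, show σ * σ = 1 from funext hσ, sigmaCongrRight_one]
  exact (sigmaFiberEquiv f).permCongr_refl

theorem comp_eq_of_eq_add_comp {M : Type*} [AddCommMagma M] {w : Perm α} (hw : w * w = 1)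
    {lam η : α → M} (h : ∀ a, lam a = η a + η (w a)) (a : α) : lam (w a) = lam a := by
  rw [h, h, apply_apply_of_mul_self_eq_one hw, add_comm]

theorem exists_eq_add_comp_of_mul_self_eq_one {M : Type*} [AddCommMonoid M] [LinearOrder α]
    {w : Perm α} (hw : w * w = 1) {lam : α → M} (hlam : ∀ a, lam (w a) = lam a)
    (heven : ∀ a, w a = a → Even (lam a)) : ∃ η : α → M, ∀ a, lam a = η a + η (w a) := by
  choose! half hhalf using heven
  refine ⟨fun a => if a < w a then 0 else if w a < a then lam a else half a, fun a => ?_⟩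
  have hww := apply_apply_of_mul_self_eq_one hw a
  rcases lt_trichotomy a (w a) with hlt | hfix | hgt
  · simp [hlt, hlt.not_gt, hww, hlam]
  · simp [← hfix, hhalf a hfix.symm]
  · simp [hgt, hgt.not_gt, hww]

end Equiv.Perm

theorem coweight_eq_eta_add_involution_eta_iff_general
    (n : ℕ) (lam : Fin n → ℤ) :
    (∃ (η : Fin n → ℤ) (w : Equiv.Perm (Fin n)),
        w * w = 1 ∧ ∀ i, lam i = η i + η (w i)) ↔
      ∀ m : ℤ, Odd m →
        Even (Finset.univ.filter (fun i : Fin n => lam i = m)).card := by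
  simp only [← Fintype.card_subtype]
  constructor
  · rintro ⟨η, w, hw, h⟩ m hm
    have heven_of_fixed : ∀ i, w i = i → Even (lam i) := fun i hfix => ⟨η i, by rw [h, hfix]⟩
    exact Perm.even_card_fiber_of_mul_self_eq_one lam hw (Perm.comp_eq_of_eq_add_comp hw h)
      fun i hi hfix => Int.not_even_iff_odd.2 hm (hi ▸ heven_of_fixed i hfix)
  · intro hfiber
    obtain ⟨w, hw, hlam, hfree⟩ := Perm.exists_mul_self_eq_one_of_even_card_fiber lam Odd hfiber
    obtain ⟨η, hη⟩ := Perm.exists_eq_add_comp_of_mul_self_eq_one hw hlam fun i hfix =>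
      Int.not_odd_iff_even.1 fun hodd => hfree i hodd hfix
    exact ⟨η, w, hw, hη⟩

/-- An integral coweight `λ` for `GL_n` can be written as `η + w(η)` for some `η` and some
involution `w` of `{1,…,n}` if and only if, for every odd integer `m`, the number of indices
`i` with `λ_i = m` is even. -/
theorem coweight_eq_eta_add_involution_eta_iff
    (n : ℕ) (hn : 1 ≤ n) (lam : Fin n → ℤ) :
    (∃ (η : Fin n → ℤ) (w : Equiv.Perm (Fin n)),
        w * w = 1 ∧ ∀ i, lam i = η i + η (w i)) ↔
      ∀ m : ℤ, Odd m →
        Even (Finset.univ.filter (fun i : Fin n => lam i = m)).card :=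
  coweight_eq_eta_add_involution_eta_iff_general n lam
end

section
/- Let n ≥ 2 and let λ : {1,…,n} → ℤ be antitone (λ_1 ≥ λ_2 ≥ … ≥ λ_n). Suppose there exist η : {1,…,n} → ℤ and a permutation w of {1,…,n} with w² = id such that λ_i = η_i + η_{w(i)} for all i. For 0 ≤ i ≤ n define r_i = −(λ_{n−i+1} + λ_{n−i+2} + … + λ_n) (so r_0 = 0). Then for every 1 ≤ i ≤ n−1: if r_i is odd, then λ_{n−i} = λ_{n−i+1}, both λ_{n−i} and λ_{n−i+1} are odd, and r_{i+1} is even. -/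
/-!
Writing `λ = η + η ∘ w` with `w` an involution, `λ ∘ w = λ` and the sum of `λ` over any
`w`-stable set is `2 ∑ η`, hence even. So if the sum over the tail `{k ≥ a}` is odd, the tail is
not `w`-stable: some `j ≥ a` has `w j < a`, and antitonicity squeezes `λ` to be constant on
`[w j, j]`, which contains the two positions around the cut. Moreover, the entries of the tail
smaller than `λ_a` form a `w`-stable set, and all other tail entries equal `λ_a`, so `λ_a` is odd.
-/

open Finset

lemma even_sum_add_comp_of_mapsTo {ι : Type*} (η : ι → ℤ) {w : ι → ι}
    (hw : Function.Involutive w) {s : Finset ι} (hs : ∀ k ∈ s, w k ∈ s) :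
    Even (∑ k ∈ s, (η k + η (w k))) := by
  have hswap : ∑ k ∈ s, η (w k) = ∑ k ∈ s, η k :=
    sum_nbij' w w hs hs (fun k _ => hw k) (fun k _ => hw k) (fun _ _ => rfl)
  rw [sum_add_distrib, hswap]
  exact ⟨_, rfl⟩

section Involution

variable {ι : Type*} {lam η : ι → ℤ} {w : ι → ι}

lemma apply_involution_eq (hw : Function.Involutive w) (hlam : ∀ k, lam k = η k + η (w k))
    (k : ι) : lam (w k) = lam k := by
  rw [hlam, hlam, hw, add_comm]

lemma exists_mem_apply_notMem_of_odd_sum (hw : Function.Involutive w)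
    (hlam : ∀ k, lam k = η k + η (w k)) {s : Finset ι} (hodd : Odd (∑ k ∈ s, lam k)) :
    ∃ j ∈ s, w j ∉ s := by
  by_contra! hs
  rw [sum_congr rfl fun k _ => hlam k] at hodd
  exact Int.not_even_iff_odd.mpr hodd (even_sum_add_comp_of_mapsTo η hw hs)

variable [LinearOrder ι] [LocallyFiniteOrderTop ι]

lemma eq_of_covBy_of_odd_sum_Ici (hw : Function.Involutive w)
    (hlam : ∀ k, lam k = η k + η (w k)) (hanti : Antitone lam) {a b : ι} (hba : b ⋖ a)
    (hodd : Odd (∑ k ∈ Ici a, lam k)) : lam b = lam a := by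
  obtain ⟨j, hj, hwj⟩ := exists_mem_apply_notMem_of_odd_sum hw hlam hodd
  rw [mem_Ici] at hj hwj
  have hwjb : w j ≤ b := hba.le_of_lt (not_le.mp hwj)
  have hwj_eq : lam (w j) = lam j := apply_involution_eq hw hlam j
  have h₁ : lam j ≤ lam a := hanti hj
  have h₂ : lam a ≤ lam b := hanti hba.le
  have h₃ : lam b ≤ lam (w j) := hanti hwjb
  omega

lemma odd_of_odd_sum_Ici (hw : Function.Involutive w) (hlam : ∀ k, lam k = η k + η (w k))
    (hanti : Antitone lam) {a : ι} (hodd : Odd (∑ k ∈ Ici a, lam k)) : Odd (lam a) := by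
  set U := (Ici a).filter (fun k => lam k < lam a)
  have hU : ∀ k ∈ U, w k ∈ U := by
    intro k hk
    rw [mem_filter, mem_Ici] at hk ⊢
    have hlt : lam (w k) < lam a := (apply_involution_eq hw hlam k).symm ▸ hk.2
    exact ⟨le_of_not_gt fun h => (hanti h.le).not_gt hlt, hlt⟩
  have hrest : ∀ k ∈ (Ici a).filter (fun k => ¬lam k < lam a), lam k = lam a := by
    intro k hk
    rw [mem_filter, mem_Ici] at hk
    exact le_antisymm (hanti hk.1) (not_lt.mp hk.2)
  have hsplit : ∑ k ∈ Ici a, lam k =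
      ∑ k ∈ U, lam k + (#((Ici a).filter (fun k => ¬lam k < lam a)) : ℤ) * lam a := by
    rw [← sum_filter_add_sum_filter_not (Ici a) (fun k => lam k < lam a), sum_congr rfl hrest,
      sum_const, nsmul_eq_mul]
  have hevenU : Even (∑ k ∈ U, lam k) := by
    rw [sum_congr rfl fun k _ => hlam k]
    exact even_sum_add_comp_of_mapsTo η hw hU
  rw [hsplit, Int.odd_add'] at hodd
  exact (Int.odd_mul.mp (hodd.mpr hevenU)).2

end Involution

/-- Suppose `λ : {1,…,n} → ℤ` is antitone and can be written as `η + w(η)` for an involution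
`w`.  Let `r_i = −(λ_{n−i+1} + ⋯ + λ_n)` (indices `1`-based; in the `Fin n` model below,
`λ_j` for `1 ≤ j ≤ n` is `lam ⟨j-1⟩`, and `r_i` is minus the sum of the last `i` values).
If `r_i` is odd for some `1 ≤ i ≤ n−1`, then `λ_{n−i} = λ_{n−i+1}`, both are odd, and
`r_{i+1}` is even. -/
theorem odd_r_implies (n : ℕ) (lam : Fin n → ℤ) (hanti : Antitone lam)
    (hrep : ∃ (η : Fin n → ℤ) (w : Equiv.Perm (Fin n)),
        w * w = 1 ∧ ∀ i, lam i = η i + η (w i))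
    (i : ℕ) (hi1 : 1 ≤ i) (hi2 : i ≤ n - 1)
    (hodd : Odd (-(∑ j ∈ Finset.univ.filter (fun j : Fin n => n - i ≤ (j : ℕ)), lam j))) :
    lam ⟨n - i - 1, by omega⟩ = lam ⟨n - i, by omega⟩ ∧
      Odd (lam ⟨n - i - 1, by omega⟩) ∧ Odd (lam ⟨n - i, by omega⟩) ∧
      Even (-(∑ j ∈ Finset.univ.filter (fun j : Fin n => n - (i + 1) ≤ (j : ℕ)), lam j)) := by
  obtain ⟨η, w, hww, hlam⟩ := hrep
  have hw : Function.Involutive w := fun k => by simpa using congrArg (· k) hww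
  set a : Fin n := ⟨n - i, by omega⟩
  set b : Fin n := ⟨n - i - 1, by omega⟩
  have hba : b ⋖ a := by simp only [Fin.covBy_iff, Nat.covBy_iff_add_one_eq, a, b]; omega
  have hTa : univ.filter (fun j : Fin n => n - i ≤ (j : ℕ)) = Ici a := by
    ext; simp [a, Fin.le_def]
  have hTb : univ.filter (fun j : Fin n => n - (i + 1) ≤ (j : ℕ)) = insert b (Ici a) := by
    ext j
    simp only [tsub_le_iff_right, mem_filter, mem_univ, true_and, mem_insert, Fin.ext_iff, mem_Ici,
      Fin.le_def, a, b]
    omega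
  rw [hTa, odd_neg] at hodd
  have hab : lam b = lam a := eq_of_covBy_of_odd_sum_Ici hw hlam hanti hba hodd
  have hodda : Odd (lam a) := odd_of_odd_sum_Ici hw hlam hanti hodd
  refine ⟨hab, hab ▸ hodda, hodda, ?_⟩
  have hb : b ∉ Ici a := by simpa using hba.lt
  rw [hTb, sum_insert hb, even_neg, hab]
  exact hodda.add_odd hodd
end

section
/- Let R be a commutative ring, let p, q ≥ 1, set n = p + q, and let A be an n×n matrix over R. Let Y be a p×q matrix and Z a q×p matrix over R, and form the block matrices U = [[I_p, Y],[0, I_q]] and V = [[I_p, 0],[Z, I_q]], both n×n. Then for any r, s ∈ {1,…,p}, the minor of U·A·V on the row set {r} ∪ {p+1,…,n} and the column set {s} ∪ {p+1,…,n} equals the minor of A on the same row and column sets. -/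
/-!
Row `r` of `U` is `e_r` plus the `r`-th row of `Y` placed in the last `q` columns, and row
`p + j` is `e_{p+j}`, so the rows of `U` indexed by `S = {r} ∪ {p+1,…,n}` are supported on `S`.
Hence the `(S, T)` block of `U * A` is the principal `S`-block of `U` times the `(S, T)` block
of `A`, and that principal block is again block unitriangular, with determinant `1`. The columns
of `V` indexed by `T = {s} ∪ {p+1,…,n}` behave in the same way.
-/

open Function

namespace Matrix

variable {l m n o : Type*} {R : Type*}

section Support

variable [Fintype l] [Fintype m] [NonUnitalNonAssocSemiring R]

theorem submatrix_mul_of_rows_supported {f : l → m} (hf : Injective f) (U : Matrix m m R)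
    (hU : ∀ i k, k ∉ Set.range f → U (f i) k = 0) (A : Matrix m n R) (g : o → n) :
    (U * A).submatrix f g = U.submatrix f f * A.submatrix f g := by
  ext i j
  exact (Fintype.sum_of_injective f hf _ _ (fun k hk => by simp [hU i k hk]) fun _ => rfl).symm

theorem submatrix_mul_of_cols_supported {g : l → m} (hg : Injective g) (V : Matrix m m R)
    (hV : ∀ k j, k ∉ Set.range g → V k (g j) = 0) (A : Matrix n m R) (f : o → n) :
    (A * V).submatrix f g = A.submatrix f g * V.submatrix g g := by
  ext i j
  exact (Fintype.sum_of_injective g hg _ _ (fun k hk => by simp [hV k j hk]) fun _ => rfl).symm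

end Support

theorem fromBlocks_submatrix_sum_map {l' m' n' o' α : Type*} (A : Matrix n l α)
    (B : Matrix n m α) (C : Matrix o l α) (D : Matrix o m α) (e₁ : n' → n) (e₂ : o' → o)
    (e₃ : l' → l) (e₄ : m' → m) :
    (fromBlocks A B C D).submatrix (Sum.map e₁ e₂) (Sum.map e₃ e₄) =
      fromBlocks (A.submatrix e₁ e₃) (B.submatrix e₁ e₄) (C.submatrix e₂ e₃)
        (D.submatrix e₂ e₄) := by
  ext (i | i) (j | j) <;> rfl

section Unipotent

variable {l' m' : Type*} [CommRing R] [DecidableEq l] [DecidableEq m]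

theorem fromBlocks_one_zero₂₁_apply_sum_map_eq_zero {e : l' → l} (Y : Matrix l m R) :
    ∀ i k, k ∉ Set.range (Sum.map e id) →
      (fromBlocks 1 Y 0 1 : Matrix (l ⊕ m) (l ⊕ m) R) (Sum.map e id i) k = 0 := by
  rintro (i | i) (k | k) hk <;> simp_all

theorem fromBlocks_one_zero₁₂_apply_sum_map_eq_zero {e : l' → l} (Z : Matrix m l R) :
    ∀ k j, k ∉ Set.range (Sum.map e id) →
      (fromBlocks 1 0 Z 1 : Matrix (l ⊕ m) (l ⊕ m) R) k (Sum.map e id j) = 0 := by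
  rintro (k | k) (j | j) hk <;> simp_all [eq_comm]

variable [Fintype l'] [Fintype m'] [DecidableEq l'] [DecidableEq m']

theorem det_submatrix_fromBlocks_one_zero₂₁ {e : l' → l} (he : Injective e) {e' : m' → m}
    (he' : Injective e') (Y : Matrix l m R) :
    ((fromBlocks 1 Y 0 1).submatrix (Sum.map e e') (Sum.map e e')).det = 1 := by
  rw [fromBlocks_submatrix_sum_map, submatrix_one _ he, submatrix_one _ he', submatrix_zero,
    Pi.zero_apply, Pi.zero_apply, det_fromBlocks_zero₂₁, det_one, det_one, mul_one]

theorem det_submatrix_fromBlocks_one_zero₁₂ {e : l' → l} (he : Injective e) {e' : m' → m}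
    (he' : Injective e') (Z : Matrix m l R) :
    ((fromBlocks 1 0 Z 1).submatrix (Sum.map e e') (Sum.map e e')).det = 1 := by
  rw [fromBlocks_submatrix_sum_map, submatrix_one _ he, submatrix_one _ he', submatrix_zero,
    Pi.zero_apply, Pi.zero_apply, det_fromBlocks_zero₁₂, det_one, det_one, mul_one]

end Unipotent

end Matrix

open Matrix in
theorem minor_invariant_under_unipotent_block_general
    (R : Type*) [CommRing R] (p q : ℕ)
    (A : Matrix (Fin p ⊕ Fin q) (Fin p ⊕ Fin q) R)
    (Y : Matrix (Fin p) (Fin q) R) (Z : Matrix (Fin q) (Fin p) R)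
    (r s : Fin p) :
    ((Matrix.fromBlocks 1 Y 0 1 * A * Matrix.fromBlocks 1 0 Z 1).submatrix
        (Sum.elim (fun _ : Unit => Sum.inl r) Sum.inr)
        (Sum.elim (fun _ : Unit => Sum.inl s) Sum.inr)).det =
      (A.submatrix
        (Sum.elim (fun _ : Unit => Sum.inl r) Sum.inr)
        (Sum.elim (fun _ : Unit => Sum.inl s) Sum.inr)).det := by
  change ((fromBlocks 1 Y 0 1 * A * fromBlocks 1 0 Z 1).submatrix
    (Sum.map (fun _ => r) id) (Sum.map (fun _ => s) id)).det =
      (A.submatrix (Sum.map (fun _ => r) id) (Sum.map (fun _ => s) id)).det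
  have hinj (t : Fin p) : Injective (Sum.map (fun _ : Unit => t) (id : Fin q → Fin q)) :=
    Sum.map_injective.2 ⟨injective_of_subsingleton _, injective_id⟩
  rw [submatrix_mul_of_cols_supported (hinj s) _
      (fromBlocks_one_zero₁₂_apply_sum_map_eq_zero Z),
    submatrix_mul_of_rows_supported (hinj r) _
      (fromBlocks_one_zero₂₁_apply_sum_map_eq_zero Y),
    det_mul, det_mul,
    det_submatrix_fromBlocks_one_zero₂₁ (injective_of_subsingleton _) injective_id,
    det_submatrix_fromBlocks_one_zero₁₂ (injective_of_subsingleton _) injective_id,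
    one_mul, mul_one]

/-- Multiplying `A` on the left by a block-upper-triangular unipotent matrix
`U = [[1, Y], [0, 1]]` and on the right by a block-lower-triangular unipotent matrix
`V = [[1, 0], [Z, 1]]` does not change the minors on row set `{r} ∪ {p+1,…,n}` and
column set `{s} ∪ {p+1,…,n}` for `r, s ∈ {1,…,p}`.  Here `{1,…,n} = Fin p ⊕ Fin q`. -/
theorem minor_invariant_under_unipotent_block
    (R : Type*) [CommRing R] (p q : ℕ) (hp : 1 ≤ p) (hq : 1 ≤ q)
    (A : Matrix (Fin p ⊕ Fin q) (Fin p ⊕ Fin q) R)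
    (Y : Matrix (Fin p) (Fin q) R) (Z : Matrix (Fin q) (Fin p) R)
    (r s : Fin p) :
    ((Matrix.fromBlocks 1 Y 0 1 * A * Matrix.fromBlocks 1 0 Z 1).submatrix
        (Sum.elim (fun _ : Unit => Sum.inl r) Sum.inr)
        (Sum.elim (fun _ : Unit => Sum.inl s) Sum.inr)).det =
      (A.submatrix
        (Sum.elim (fun _ : Unit => Sum.inl r) Sum.inr)
        (Sum.elim (fun _ : Unit => Sum.inl s) Sum.inr)).det :=
  minor_invariant_under_unipotent_block_general R p q A Y Z r s
end

section
/- With the twisted GKLO operators κ_{i,k} as in the context: for all pairs (i,k) ≠ (j,l) (with i, j ∈ I, 1 ≤ k ≤ m_i, 1 ≤ l ≤ m_j), the following identity of ℂ-linear endomorphisms of F holds: M(γ_{i,k} − γ_{j,l} − ½ a_{ij} ℏ) ∘ κ_{i,k} ∘ κ_{j,l} = M(γ_{i,k} − γ_{j,l} + ½ a_{ij} ℏ) ∘ κ_{j,l} ∘ κ_{i,k}. -/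
/-!
Since `κ_{i,k} κ_{j,l} = M(c_{i,k} · σ⁻_{i,k}(c_{j,l})) σ⁻_{i,k} σ⁻_{j,l}`, the relation
splits in two. The automorphisms `σ⁻_{i,k}` and `σ⁻_{j,l}` commute, because each fixes `ℏ`
and moves every generator by a constant multiple of `ℏ`. The coefficients satisfy a scalar
identity of rational functions: `σ⁻_{i,k}(c_{j,l})` is `c_{j,l}` with `γ_{i,k}` lowered by
`ℏ`, which changes at most one factor of `c_{j,l}`. For `|i - j| ≥ 2` nothing changes, for
`|i - j| = 1` the changed factors match up after factoring differences of squares, and for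
`i = j` a factor `γ_{i,k} - γ_{i,l} ∓ ℏ` cancels; it is nonzero because the `γ`'s and `ℏ`
are distinct indeterminates.
-/
/- Twisted GKLO representation setup (type AI).
   Indices: `i ∈ I = {1,…,n−1}`, `1 ≤ k ≤ m i`, with conventions `m 0 = m n = 0`
   (and `lam 0 = lam n = 0`), so that the indeterminates are exactly
   `ℏ`, `γ_{i,k}` (`i ∈ I`, `1 ≤ k ≤ m i`), `r_{i,t}` (`i ∈ I`, `1 ≤ t ≤ lam i`). -/

noncomputable section

/-- The indexing type of the indeterminates: `ℏ`, the `γ_{i,k}` and the `r_{i,t}`. -/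
abbrev GVar (n : ℕ) (m lam : ℕ → ℕ) : Type :=
  Unit ⊕ ((Σ i : Fin (n + 1), Fin (m i)) ⊕ (Σ i : Fin (n + 1), Fin (lam i)))

/-- `F`, the fraction field of the polynomial ring over `ℂ` in the indeterminates. -/
abbrev GF (n : ℕ) (m lam : ℕ → ℕ) : Type :=
  FractionRing (MvPolynomial (GVar n m lam) ℂ)

/-- The indeterminate `ℏ`. -/
def hb (n : ℕ) (m lam : ℕ → ℕ) : GF n m lam :=
  algebraMap (MvPolynomial (GVar n m lam) ℂ) (GF n m lam) (MvPolynomial.X (Sum.inl ()))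

/-- The indeterminate `γ_{i,k}` (for `1 ≤ k ≤ m i`, `i ≤ n`; junk value `0` otherwise). -/
def gam (n : ℕ) (m lam : ℕ → ℕ) (i k : ℕ) : GF n m lam :=
  if h : i < n + 1 ∧ k - 1 < m i then
    algebraMap (MvPolynomial (GVar n m lam) ℂ) (GF n m lam)
      (MvPolynomial.X (Sum.inr (Sum.inl ⟨⟨i, h.1⟩, ⟨k - 1, h.2⟩⟩)))
  else 0

/-- The indeterminate `r_{i,t}` (for `1 ≤ t ≤ lam i`, `i ≤ n`; junk value `0` otherwise). -/
def rv (n : ℕ) (m lam : ℕ → ℕ) (i t : ℕ) : GF n m lam :=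
  if h : i < n + 1 ∧ t - 1 < lam i then
    algebraMap (MvPolynomial (GVar n m lam) ℂ) (GF n m lam)
      (MvPolynomial.X (Sum.inr (Sum.inr ⟨⟨i, h.1⟩, ⟨t - 1, h.2⟩⟩)))
  else 0

/-- `ξ_{i,k} = γ_{i,k} + ℏ`. -/
def xi (n : ℕ) (m lam : ℕ → ℕ) (i k : ℕ) : GF n m lam :=
  gam n m lam i k + hb n m lam

/-- `R_i(x) = ∏_{t=1}^{λ_i} (x² − r_{i,t}²)`. -/
def RR (n : ℕ) (m lam : ℕ → ℕ) (i : ℕ) (x : GF n m lam) : GF n m lam :=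
  ∏ t ∈ Finset.Icc 1 (lam i), (x ^ 2 - rv n m lam i t ^ 2)

/-- The coefficient `c_{i,k}` of the twisted GKLO operator `κ_{i,k}`. -/
def cc (n : ℕ) (m lam : ℕ → ℕ) (i k : ℕ) : GF n m lam :=
  ((∏ l ∈ Finset.Icc 1 (m (i + 1)),
      (gam n m lam i k ^ 2 - (gam n m lam (i + 1) l + hb n m lam / 2) ^ 2)) *
    ∏ l ∈ Finset.Icc 1 (m (i - 1)),
      (gam n m lam i k + gam n m lam (i - 1) l + hb n m lam / 2)) /
  (2 * (gam n m lam i k - hb n m lam / 2) *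
    ∏ l ∈ (Finset.Icc 1 (m i)).erase k, (gam n m lam i k ^ 2 - gam n m lam i l ^ 2))

/-- The coefficient `c'_{i,k}` of the twisted GKLO operator `κ'_{i,k}`. -/
def cc' (n : ℕ) (m lam : ℕ → ℕ) (i k : ℕ) : GF n m lam :=
  (RR n m lam i (xi n m lam i k) *
    ∏ l ∈ Finset.Icc 1 (m (i - 1)),
      (xi n m lam i k - gam n m lam (i - 1) l - hb n m lam / 2)) /
  (2 * (gam n m lam i k + 3 * hb n m lam / 2) *
    ∏ l ∈ (Finset.Icc 1 (m i)).erase k, (xi n m lam i k ^ 2 - xi n m lam i l ^ 2))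

/-- `M(f)`, the multiplication operator `x ↦ f·x`, as a `ℂ`-linear endomorphism of `F`. -/
def Mop (n : ℕ) (m lam : ℕ → ℕ) (f : GF n m lam) : Module.End ℂ (GF n m lam) :=
  LinearMap.mulLeft ℂ f

/-- `κ_{i,k} = M(c_{i,k}) ∘ σ⁻_{i,k}`, where `σ` is the family of automorphisms `σ⁻`. -/
def kap (n : ℕ) (m lam : ℕ → ℕ) (σ : ℕ → ℕ → (GF n m lam ≃ₐ[ℂ] GF n m lam))
    (i k : ℕ) : Module.End ℂ (GF n m lam) :=
  Mop n m lam (cc n m lam i k) * (σ i k).toLinearMap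

/-- `κ'_{i,k} = M(c'_{i,k}) ∘ σ⁺_{i,k}`, where `σ` is the family of automorphisms `σ⁺`. -/
def kap' (n : ℕ) (m lam : ℕ → ℕ) (σ : ℕ → ℕ → (GF n m lam ≃ₐ[ℂ] GF n m lam))
    (i k : ℕ) : Module.End ℂ (GF n m lam) :=
  Mop n m lam (cc' n m lam i k) * (σ i k).toLinearMap

/-- The Cartan matrix of `sl_n`: `a_{ii} = 2`, `a_{ij} = −1` if `|i−j|=1`, else `0`. -/
def cartan (i j : ℕ) : ℤ :=
  if i = j then 2 else if i + 1 = j ∨ j + 1 = i then -1 else 0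

open Finset MvPolynomial

section
variable {K : Type*} [Field K]

/-- `c_{i,k}` with the values `g r c` and `h` in place of `γ_{r,c}` and `ℏ`, so that
`cc n m lam = gkloCoeff m (gam n m lam) (hb n m lam)` by definition. -/
def gkloCoeff (m : ℕ → ℕ) (g : ℕ → ℕ → K) (h : K) (i k : ℕ) : K :=
  ((∏ l ∈ Icc 1 (m (i + 1)), (g i k ^ 2 - (g (i + 1) l + h / 2) ^ 2)) *
    ∏ l ∈ Icc 1 (m (i - 1)), (g i k + g (i - 1) l + h / 2)) /
  (2 * (g i k - h / 2) * ∏ l ∈ (Icc 1 (m i)).erase k, (g i k ^ 2 - g i l ^ 2))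

/-- The substitution `σ⁻_{i,k}` on the values: `g` with its entry at `(i, k)` lowered by `h`. -/
def shiftAt (g : ℕ → ℕ → K) (h : K) (i k r c : ℕ) : K :=
  if r = i ∧ c = k then g i k - h else g r c

variable (m : ℕ → ℕ) (g : ℕ → ℕ → K) (h : K) {i k j l r : ℕ}

theorem shiftAt_of_ne_row (hr : r ≠ i) (c : ℕ) : shiftAt g h i k r c = g r c := by
  simp [shiftAt, hr]

theorem shiftAt_of_ne_col {c : ℕ} (hc : c ≠ k) : shiftAt g h i k r c = g r c := by
  simp [shiftAt, hc]

theorem prod_shiftAt_row {M : Type*} [CommMonoid M] {S : Finset ℕ} (hk : k ∈ S) (F : K → M) :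
    ∏ c ∈ S, F (shiftAt g h i k i c) = F (g i k - h) * ∏ c ∈ S.erase k, F (g i c) := by
  simp [shiftAt, apply_ite F, prod_ite, filter_eq', filter_ne', hk]

theorem gkloCoeff_relation_same_row (hi : i ≠ 0) (hk : k ∈ Icc 1 (m i)) (hl : l ∈ Icc 1 (m i))
    (hkl : k ≠ l) (h₁ : g i k - g i l - h ≠ 0) (h₂ : g i k - g i l + h ≠ 0) :
    (g i k - g i l - h) * gkloCoeff m g h i k * gkloCoeff m (shiftAt g h i k) h i l =
      (g i k - g i l + h) * gkloCoeff m g h i l * gkloCoeff m (shiftAt g h i l) h i k := by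
  have hkl' : k ∈ (Icc 1 (m i)).erase l := mem_erase.mpr ⟨hkl, hk⟩
  have hlk' : l ∈ (Icc 1 (m i)).erase k := mem_erase.mpr ⟨hkl.symm, hl⟩
  simp only [gkloCoeff, shiftAt_of_ne_row g h (show i + 1 ≠ i by omega),
    shiftAt_of_ne_row g h (show i - 1 ≠ i by omega), shiftAt_of_ne_col g h hkl,
    shiftAt_of_ne_col g h hkl.symm]
  rw [prod_shiftAt_row g h hkl' (fun y => g i l ^ 2 - y ^ 2),
    prod_shiftAt_row g h hlk' (fun y => g i k ^ 2 - y ^ 2),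
    ← mul_prod_erase _ (fun y => g i k ^ 2 - g i y ^ 2) hlk',
    ← mul_prod_erase _ (fun y => g i l ^ 2 - g i y ^ 2) hkl', erase_right_comm]
  set a := g i k
  set b := g i l
  generalize ∏ x ∈ ((Icc 1 (m i)).erase l).erase k, (b ^ 2 - g i x ^ 2) = Rl
  generalize ∏ x ∈ ((Icc 1 (m i)).erase l).erase k, (a ^ 2 - g i x ^ 2) = Rk
  generalize (∏ x ∈ Icc 1 (m (i + 1)), (a ^ 2 - (g (i + 1) x + h / 2) ^ 2)) *
    ∏ x ∈ Icc 1 (m (i - 1)), (a + g (i - 1) x + h / 2) = Nk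
  generalize (∏ x ∈ Icc 1 (m (i + 1)), (b ^ 2 - (g (i + 1) x + h / 2) ^ 2)) *
    ∏ x ∈ Icc 1 (m (i - 1)), (b + g (i - 1) x + h / 2) = Nl
  -- both sides are `-1 / ((a ^ 2 - b ^ 2) * (a + b - h))` once the factor `a - b ∓ h` cancels
  have hcancel : (a - b - h) / ((a ^ 2 - b ^ 2) * (b ^ 2 - (a - h) ^ 2)) =
      (a - b + h) / ((b ^ 2 - a ^ 2) * (a ^ 2 - (b - h) ^ 2)) := by
    rw [show (a ^ 2 - b ^ 2) * (b ^ 2 - (a - h) ^ 2) =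
          (a - b - h) * -((a ^ 2 - b ^ 2) * (a + b - h)) by ring,
      show (b ^ 2 - a ^ 2) * (a ^ 2 - (b - h) ^ 2) =
          (a - b + h) * -((a ^ 2 - b ^ 2) * (a + b - h)) by ring,
      div_mul_cancel_left₀ h₁, div_mul_cancel_left₀ h₂]
  simp only [div_eq_mul_inv, mul_inv] at hcancel ⊢
  linear_combination
    Nk * Nl * 2⁻¹ * (a - h / 2)⁻¹ * 2⁻¹ * (b - h / 2)⁻¹ * Rk⁻¹ * Rl⁻¹ * hcancel

theorem gkloCoeff_relation_succ [CharZero K] (hk : k ∈ Icc 1 (m i))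
    (hl : l ∈ Icc 1 (m (i + 1))) :
    (g i k - g (i + 1) l + h / 2) * gkloCoeff m g h i k
        * gkloCoeff m (shiftAt g h i k) h (i + 1) l =
      (g i k - g (i + 1) l - h / 2) * gkloCoeff m g h (i + 1) l
        * gkloCoeff m (shiftAt g h (i + 1) l) h i k := by
  simp only [gkloCoeff, Nat.add_sub_cancel, shiftAt_of_ne_row g h (show i + 1 ≠ i by omega),
    shiftAt_of_ne_row g h (show i + 1 + 1 ≠ i by omega),
    shiftAt_of_ne_row g h (show i ≠ i + 1 by omega),
    shiftAt_of_ne_row g h (show i - 1 ≠ i + 1 by omega)]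
  rw [prod_shiftAt_row g h hk (fun y => g (i + 1) l + y + h / 2),
    prod_shiftAt_row g h hl (fun y => g i k ^ 2 - (y + h / 2) ^ 2),
    ← mul_prod_erase _ (fun y => g (i + 1) l + g i y + h / 2) hk,
    ← mul_prod_erase _ (fun y => g i k ^ 2 - (g (i + 1) y + h / 2) ^ 2) hl]
  ring

theorem gkloCoeff_shiftAt_of_far (hij : i ≠ j) (hij₁ : i ≠ j + 1) (hji₁ : j ≠ i + 1) :
    gkloCoeff m (shiftAt g h i k) h j l = gkloCoeff m g h j l := by
  simp only [gkloCoeff, shiftAt_of_ne_row g h hij.symm, shiftAt_of_ne_row g h hij₁.symm,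
    shiftAt_of_ne_row g h (show j - 1 ≠ i by omega)]

theorem gkloCoeff_shiftAt_relation [CharZero K] (hi : i ≠ 0) (hk : k ∈ Icc 1 (m i))
    (hl : l ∈ Icc 1 (m j)) (hne : (i, k) ≠ (j, l)) (h₁ : g i k - g j l - h ≠ 0)
    (h₂ : g i k - g j l + h ≠ 0) :
    (g i k - g j l - (cartan i j : K) * h / 2) * gkloCoeff m g h i k
        * gkloCoeff m (shiftAt g h i k) h j l =
      (g i k - g j l + (cartan i j : K) * h / 2) * gkloCoeff m g h j l
        * gkloCoeff m (shiftAt g h j l) h i k := by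
  obtain rfl | rfl | rfl | ⟨hij, hji₁, hij₁⟩ :
      i = j ∨ j = i + 1 ∨ i = j + 1 ∨ (i ≠ j ∧ j ≠ i + 1 ∧ i ≠ j + 1) := by omega
  · have hkl : k ≠ l := fun hkl => hne (by rw [hkl])
    rw [show cartan i i = 2 from if_pos rfl]
    push_cast
    linear_combination gkloCoeff_relation_same_row m g h hi hk hl hkl h₁ h₂
  · rw [show cartan i (i + 1) = -1 by simp [cartan]]
    push_cast
    linear_combination gkloCoeff_relation_succ m g h hk hl
  · rw [show cartan (j + 1) j = -1 by simp [cartan]]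
    push_cast
    linear_combination gkloCoeff_relation_succ m g h hl hk
  · rw [show cartan i j = 0 by simp [cartan]; omega,
      gkloCoeff_shiftAt_of_far m g h hij hij₁ hji₁,
      gkloCoeff_shiftAt_of_far m g h (Ne.symm hij) hji₁ hij₁]
    push_cast
    ring

theorem map_gkloCoeff {L F : Type*} [Field L] [FunLike F K L] [RingHomClass F K L] (f : F) :
    f (gkloCoeff m g h i k) = gkloCoeff m (fun r c => f (g r c)) (f h) i k := by
  simp [gkloCoeff, map_prod, map_ofNat]

theorem gkloCoeff_congr {g' : ℕ → ℕ → K} (hk : k ∈ Icc 1 (m i))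
    (hg : ∀ r ≤ i + 1, ∀ c ∈ Icc 1 (m r), g r c = g' r c) :
    gkloCoeff m g h i k = gkloCoeff m g' h i k := by
  unfold gkloCoeff
  rw [hg i (by omega) k hk]
  congr 2
  all_goals refine prod_congr rfl fun c hc => ?_
  · rw [hg (i + 1) le_rfl c hc]
  · rw [hg (i - 1) (by omega) c hc]
  · rw [hg i (by omega) c (mem_of_mem_erase hc)]

end

theorem MvPolynomial.X_sub_X_add_C_mul_X_ne_zero {σ R : Type*} [CommRing R] [Nontrivial R]
    {u v w : σ} (hv : u ≠ v) (hw : u ≠ w) (c : R) :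
    (X u - X v + C c * X w : MvPolynomial σ R) ≠ 0 := by
  classical
  intro h0
  simpa [Pi.single_apply, hv.symm, hw.symm] using congrArg (eval (Pi.single u 1)) h0

theorem MvPolynomial.fractionRing_algEquiv_comm_of_translations {σ R : Type*} [CommRing R]
    (s t : FractionRing (MvPolynomial σ R) ≃ₐ[R] FractionRing (MvPolynomial σ R))
    (e : FractionRing (MvPolynomial σ R)) (hse : s e = e) (hte : t e = e)
    (hs : ∀ v, ∃ a : R, s (algebraMap (MvPolynomial σ R) _ (X v)) =
      algebraMap (MvPolynomial σ R) _ (X v) + a • e)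
    (ht : ∀ v, ∃ b : R, t (algebraMap (MvPolynomial σ R) _ (X v)) =
      algebraMap (MvPolynomial σ R) _ (X v) + b • e)
    (x : FractionRing (MvPolynomial σ R)) : s (t x) = t (s x) := by
  suffices s.toAlgHom.comp t.toAlgHom = t.toAlgHom.comp s.toAlgHom from AlgHom.congr_fun this x
  ext v
  obtain ⟨a, ha⟩ := hs v
  obtain ⟨b, hb⟩ := ht v
  change s (t (algebraMap (MvPolynomial σ R) _ (X v))) =
    t (s (algebraMap (MvPolynomial σ R) _ (X v)))
  rw [hb, map_add, map_smul, ha, hse, map_add, map_smul, hb, hte, add_right_comm]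

section
variable {n : ℕ} {m lam : ℕ → ℕ}

theorem gam_succ (r : Fin (n + 1)) (c : Fin (m r)) :
    gam n m lam r (c + 1) =
      algebraMap (MvPolynomial (GVar n m lam) ℂ) _ (X (Sum.inr (Sum.inl ⟨r, c⟩))) := by
  rw [gam, dif_pos ⟨r.isLt, by omega⟩]
  rfl

theorem rv_succ (r : Fin (n + 1)) (t : Fin (lam r)) :
    rv n m lam r (t + 1) =
      algebraMap (MvPolynomial (GVar n m lam) ℂ) _ (X (Sum.inr (Sum.inr ⟨r, t⟩))) := by
  rw [rv, dif_pos ⟨r.isLt, by omega⟩]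
  rfl

theorem one_le_and_le_sub_one_of_mem_Icc (hm0 : m 0 = 0) (hmn : m n = 0) {r c : ℕ} (hr : r ≤ n)
    (hc : c ∈ Icc 1 (m r)) : 1 ≤ r ∧ r ≤ n - 1 := by
  rw [mem_Icc] at hc
  have h0 : r ≠ 0 := by rintro rfl; omega
  have hn : r ≠ n := by rintro rfl; omega
  omega

theorem gam_sub_gam_add_mul_hb_ne_zero {i k j l : ℕ} (hi : i ≤ n) (hk : k ∈ Icc 1 (m i))
    (hj : j ≤ n) (hl : l ∈ Icc 1 (m j)) (hne : (i, k) ≠ (j, l)) (c : ℂ) :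
    gam n m lam i k - gam n m lam j l + algebraMap ℂ _ c * hb n m lam ≠ 0 := by
  rw [mem_Icc] at hk hl
  obtain ⟨r, rfl⟩ : ∃ r : Fin (n + 1), (r : ℕ) = i := ⟨⟨i, by omega⟩, rfl⟩
  obtain ⟨a, rfl⟩ : ∃ a : Fin (m r), (a : ℕ) + 1 = k := ⟨⟨k - 1, by omega⟩, by simp; omega⟩
  obtain ⟨r', rfl⟩ : ∃ r' : Fin (n + 1), (r' : ℕ) = j := ⟨⟨j, by omega⟩, rfl⟩
  obtain ⟨b, rfl⟩ : ∃ b : Fin (m r'), (b : ℕ) + 1 = l := ⟨⟨l - 1, by omega⟩, by simp; omega⟩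
  have hab : (Sum.inr (Sum.inl ⟨r, a⟩) : GVar n m lam) ≠ Sum.inr (Sum.inl ⟨r', b⟩) := by
    intro h
    simp only [Sum.inr.injEq, Sum.inl.injEq, Sigma.mk.inj_iff] at h
    obtain ⟨rfl, hab⟩ := h
    exact hne (by rw [eq_of_heq hab])
  rw [gam_succ, gam_succ, show hb n m lam = algebraMap _ _ (X (Sum.inl ())) from rfl,
    IsScalarTower.algebraMap_apply ℂ (MvPolynomial (GVar n m lam) ℂ), algebraMap_eq,
    ← map_sub, ← map_mul, ← map_add]
  exact (map_ne_zero_iff _ (IsFractionRing.injective _ _)).mpr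
    (X_sub_X_add_C_mul_X_ne_zero hab (by simp) c)

variable {i k : ℕ}

theorem exists_map_X_eq_add_smul_hb (hm0 : m 0 = 0) (hmn : m n = 0)
    (s : GF n m lam ≃ₐ[ℂ] GF n m lam)
    (hsg : ∀ r c, 1 ≤ r → r ≤ n - 1 → 1 ≤ c → c ≤ m r →
      s (gam n m lam r c) = shiftAt (gam n m lam) (hb n m lam) i k r c)
    (hsh : s (hb n m lam) = hb n m lam)
    (hsr : ∀ r t, s (rv n m lam r t) = rv n m lam r t) (v : GVar n m lam) :
    ∃ a : ℂ, s (algebraMap (MvPolynomial (GVar n m lam) ℂ) _ (X v)) =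
      algebraMap (MvPolynomial (GVar n m lam) ℂ) _ (X v) + a • hb n m lam := by
  rcases v with ⟨⟩ | ⟨r, c⟩ | ⟨r, t⟩
  · exact ⟨0, by rw [zero_smul, add_zero]; exact hsh⟩
  · obtain ⟨h1, h2⟩ := one_le_and_le_sub_one_of_mem_Icc hm0 hmn (c := c + 1) r.is_le
      (by simp [mem_Icc])
    rw [← gam_succ, hsg r (c + 1) h1 h2 (by omega) c.isLt, shiftAt]
    split_ifs with hrc
    · obtain ⟨rfl, rfl⟩ := hrc
      exact ⟨-1, by simp [sub_eq_add_neg]⟩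
    · exact ⟨0, by simp⟩
  · exact ⟨0, by rw [← rv_succ, hsr, zero_smul, add_zero]⟩

theorem map_cc (hm0 : m 0 = 0) (hmn : m n = 0) (s : GF n m lam ≃ₐ[ℂ] GF n m lam)
    (hsg : ∀ r c, 1 ≤ r → r ≤ n - 1 → 1 ≤ c → c ≤ m r →
      s (gam n m lam r c) = shiftAt (gam n m lam) (hb n m lam) i k r c)
    (hsh : s (hb n m lam) = hb n m lam) {j l : ℕ} (hj : j < n) (hl : l ∈ Icc 1 (m j)) :
    s (cc n m lam j l) =
      gkloCoeff m (shiftAt (gam n m lam) (hb n m lam) i k) (hb n m lam) j l := by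
  change s (gkloCoeff m (gam n m lam) (hb n m lam) j l) = _
  rw [map_gkloCoeff, hsh]
  refine gkloCoeff_congr m _ _ hl fun r hr c hc => ?_
  obtain ⟨h1, h2⟩ := one_le_and_le_sub_one_of_mem_Icc hm0 hmn (by omega) hc
  exact hsg r c h1 h2 (mem_Icc.mp hc).1 (mem_Icc.mp hc).2

end

theorem gklo_kappa_kappa_relation_general (n : ℕ) (m lam : ℕ → ℕ)
    (hm0 : m 0 = 0) (hmn : m n = 0)
    (σm : ℕ → ℕ → (GF n m lam ≃ₐ[ℂ] GF n m lam))
    (hσmh : ∀ i k, σm i k (hb n m lam) = hb n m lam)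
    (hσmr : ∀ i k i' t, σm i k (rv n m lam i' t) = rv n m lam i' t)
    (hσmg : ∀ i k i' k', 1 ≤ i' → i' ≤ n - 1 → 1 ≤ k' → k' ≤ m i' →
      σm i k (gam n m lam i' k') =
        if i' = i ∧ k' = k then gam n m lam i k - hb n m lam else gam n m lam i' k')
    (i k j l : ℕ)
    (hi : 1 ≤ i) (hi' : i ≤ n - 1) (hk : 1 ≤ k) (hk' : k ≤ m i)
    (hj : 1 ≤ j) (hj' : j ≤ n - 1) (hl : 1 ≤ l) (hl' : l ≤ m j)
    (hne : (i, k) ≠ (j, l)) :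
    Mop n m lam (gam n m lam i k - gam n m lam j l - (cartan i j : GF n m lam) * hb n m lam / 2) *
        kap n m lam σm i k * kap n m lam σm j l =
      Mop n m lam (gam n m lam i k - gam n m lam j l + (cartan i j : GF n m lam) * hb n m lam / 2) *
        kap n m lam σm j l * kap n m lam σm i k := by
  have hkI : k ∈ Icc 1 (m i) := mem_Icc.mpr ⟨hk, hk'⟩
  have hlI : l ∈ Icc 1 (m j) := mem_Icc.mpr ⟨hl, hl'⟩
  have hcomm (x) : σm i k (σm j l x) = σm j l (σm i k x) :=
    fractionRing_algEquiv_comm_of_translations _ _ _ (hσmh i k) (hσmh j l)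
      (exists_map_X_eq_add_smul_hb hm0 hmn _ (hσmg i k) (hσmh i k) (hσmr i k))
      (exists_map_X_eq_add_smul_hb hm0 hmn _ (hσmg j l) (hσmh j l) (hσmr j l)) x
  have hcoeff :
      (gam n m lam i k - gam n m lam j l - (cartan i j : GF n m lam) * hb n m lam / 2) *
          cc n m lam i k * σm i k (cc n m lam j l) =
        (gam n m lam i k - gam n m lam j l + (cartan i j : GF n m lam) * hb n m lam / 2) *
          cc n m lam j l * σm j l (cc n m lam i k) := by
    have hsep :=
      gam_sub_gam_add_mul_hb_ne_zero (n := n) (lam := lam) (by omega) hkI (by omega) hlI hne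
    rw [map_cc hm0 hmn _ (hσmg i k) (hσmh i k) (by omega) hlI,
      map_cc hm0 hmn _ (hσmg j l) (hσmh j l) (by omega) hkI]
    exact gkloCoeff_shiftAt_relation m _ _ (by omega) hkI hlI hne
      (by simpa [sub_eq_add_neg] using hsep (-1)) (by simpa using hsep 1)
  ext x
  simp only [kap, Mop, Module.End.mul_apply, LinearMap.mulLeft_apply,
    AlgEquiv.toLinearMap_apply, map_mul, hcomm x]
  linear_combination σm j l (σm i k x) * hcoeff

theorem gklo_kappa_kappa_relation (n : ℕ) (hn : 2 ≤ n) (m lam : ℕ → ℕ)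
    (hm0 : m 0 = 0) (hmn : m n = 0) (hlam0 : lam 0 = 0) (hlamn : lam n = 0)
    (σm σp : ℕ → ℕ → (GF n m lam ≃ₐ[ℂ] GF n m lam))
    (hσmh : ∀ i k, σm i k (hb n m lam) = hb n m lam)
    (hσph : ∀ i k, σp i k (hb n m lam) = hb n m lam)
    (hσmr : ∀ i k i' t, σm i k (rv n m lam i' t) = rv n m lam i' t)
    (hσpr : ∀ i k i' t, σp i k (rv n m lam i' t) = rv n m lam i' t)
    (hσmg : ∀ i k i' k', 1 ≤ i' → i' ≤ n - 1 → 1 ≤ k' → k' ≤ m i' →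
      σm i k (gam n m lam i' k') =
        if i' = i ∧ k' = k then gam n m lam i k - hb n m lam else gam n m lam i' k')
    (hσpg : ∀ i k i' k', 1 ≤ i' → i' ≤ n - 1 → 1 ≤ k' → k' ≤ m i' →
      σp i k (gam n m lam i' k') =
        if i' = i ∧ k' = k then gam n m lam i k + hb n m lam else gam n m lam i' k')
    (i k j l : ℕ)
    (hi : 1 ≤ i) (hi' : i ≤ n - 1) (hk : 1 ≤ k) (hk' : k ≤ m i)
    (hj : 1 ≤ j) (hj' : j ≤ n - 1) (hl : 1 ≤ l) (hl' : l ≤ m j)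
    (hne : (i, k) ≠ (j, l)) :
    Mop n m lam (gam n m lam i k - gam n m lam j l - (cartan i j : GF n m lam) * hb n m lam / 2) *
        kap n m lam σm i k * kap n m lam σm j l =
      Mop n m lam (gam n m lam i k - gam n m lam j l + (cartan i j : GF n m lam) * hb n m lam / 2) *
        kap n m lam σm j l * kap n m lam σm i k :=
  gklo_kappa_kappa_relation_general n m lam hm0 hmn σm hσmh hσmr hσmg i k j l hi hi' hk hk' hj hj'
    hl hl' hne
end
end

section
/- With the twisted GKLO operators κ'_{i,k} as in the context: for all pairs (i,k) ≠ (j,l) (with i, j ∈ I, 1 ≤ k ≤ m_i, 1 ≤ l ≤ m_j), the following identity of ℂ-linear endomorphisms of F holds: κ'_{i,k} ∘ κ'_{j,l} ∘ M(γ_{i,k} − γ_{j,l} + ½ a_{ij} ℏ) = κ'_{j,l} ∘ κ'_{i,k} ∘ M(γ_{i,k} − γ_{j,l} − ½ a_{ij} ℏ). -/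
/- Twisted GKLO representation setup (type AI).
   Indices: `i ∈ I = {1,…,n−1}`, `1 ≤ k ≤ m i`, with conventions `m 0 = m n = 0`
   (and `lam 0 = lam n = 0`), so that the indeterminates are exactly
   `ℏ`, `γ_{i,k}` (`i ∈ I`, `1 ≤ k ≤ m i`), `r_{i,t}` (`i ∈ I`, `1 ≤ t ≤ lam i`). -/

noncomputable section

/-! Writing `κ'_{i,k} = M(c'_{i,k}) ∘ σ_{i,k}` and moving automorphisms past multiplication
operators, both sides become `M(·) ∘ σ_{i,k} σ_{j,l}`: the two shifts commute, since they commute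
on the generators of `F`, so the relation is an identity between coefficients. Viewing `c'_{j,l}`
as a function of the family `γ`, the shift `γ_{i,k} ↦ γ_{i,k} + ℏ` changes it only when
`i ∈ {j - 1, j}`, and then in a single factor: one factor `ξ_{j,l}² − ξ_{j,k}²` of the
denominator when `i = j`, one factor `ξ_{j,l} − γ_{i,k} − ½ℏ` of the numerator when `j = i + 1`.
The only nonvanishing needed is `γ_{i,k} − γ_{i,l} ± ℏ ≠ 0`. -/

namespace GKLO

open MvPolynomial Finset

theorem fractionRing_mvPolynomial_algHom_ext {ι R A : Type*} [CommRing R] [CommRing A]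
    [Algebra R A] {f g : FractionRing (MvPolynomial ι R) →ₐ[R] A}
    (h : ∀ v, f (algebraMap (MvPolynomial ι R) _ (X v)) =
      g (algebraMap (MvPolynomial ι R) _ (X v))) :
    f = g := by
  refine AlgHom.coe_ringHom_injective
    (IsLocalization.ringHom_ext (nonZeroDivisors (MvPolynomial ι R)) ?_)
  refine MvPolynomial.ringHom_ext (fun c => ?_) h
  have hC : algebraMap (MvPolynomial ι R) (FractionRing (MvPolynomial ι R)) (C c) =
      algebraMap R _ c := by
    rw [← MvPolynomial.algebraMap_eq, ← IsScalarTower.algebraMap_apply]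
  simp only [RingHom.coe_comp, RingHom.coe_coe, Function.comp_apply, hC, AlgHom.commutes]

/- With `p = x + h`, `q = y + h`: `q² − (p + h)² = −(x − y + h)(p + q + h)` and
`p² − (q + h)² = (x − y − h)(p + q + h)`, so both sides equal `−1 / ((p² − q²)(p + q + h))`. -/
theorem sub_add_div_div_eq_sub_sub_div_div {K : Type*} [Field K] {x y h : K}
    (hxy : x + h ≠ y) (hyx : y + h ≠ x) :
    (x - y + h) / ((x + h) ^ 2 - (y + h) ^ 2) / ((y + h) ^ 2 - (x + h + h) ^ 2) =
      (x - y - h) / ((y + h) ^ 2 - (x + h) ^ 2) / ((x + h) ^ 2 - (y + h + h) ^ 2) := by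
  have hp : x - y + h ≠ 0 := fun e => hxy (by linear_combination e)
  have hm : x - y - h ≠ 0 := fun e => hyx (by linear_combination -e)
  have e₁ : ((x + h) ^ 2 - (y + h) ^ 2) * ((y + h) ^ 2 - (x + h + h) ^ 2) =
      (x - y + h) * -(((x + h) ^ 2 - (y + h) ^ 2) * (x + y + 3 * h)) := by ring
  have e₂ : ((y + h) ^ 2 - (x + h) ^ 2) * ((x + h) ^ 2 - (y + h + h) ^ 2) =
      (x - y - h) * -(((x + h) ^ 2 - (y + h) ^ 2) * (x + y + 3 * h)) := by ring
  rw [div_div, div_div, e₁, e₂, div_mul_cancel_left₀ hp, div_mul_cancel_left₀ hm]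

variable {n : ℕ} {m lam : ℕ → ℕ}

theorem algebraMap_X_gam {i k : ℕ} (hi : i < n + 1) (hk : k < m i) :
    algebraMap (MvPolynomial (GVar n m lam) ℂ) (GF n m lam)
      (X (Sum.inr (Sum.inl ⟨⟨i, hi⟩, ⟨k, hk⟩⟩))) = gam n m lam i (k + 1) := by
  rw [gam, dif_pos ⟨hi, by simpa using hk⟩]
  rfl

theorem algebraMap_X_rv {i t : ℕ} (hi : i < n + 1) (ht : t < lam i) :
    algebraMap (MvPolynomial (GVar n m lam) ℂ) (GF n m lam)
      (X (Sum.inr (Sum.inr ⟨⟨i, hi⟩, ⟨t, ht⟩⟩))) = rv n m lam i (t + 1) := by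
  rw [rv, dif_pos ⟨hi, by simpa using ht⟩]
  rfl

theorem gam_add_hb_ne (i k i' k' : ℕ) : gam n m lam i k + hb n m lam ≠ gam n m lam i' k' := by
  have hpoly : ∀ a b, ∃ p, eval (fun v => if v = Sum.inl () then 1 else 0) p = 0 ∧
      algebraMap (MvPolynomial (GVar n m lam) ℂ) (GF n m lam) p = gam n m lam a b := by
    intro a b
    unfold gam
    split_ifs
    · exact ⟨X _, by simp, rfl⟩
    · exact ⟨0, by simp, map_zero _⟩
  obtain ⟨p, hp, hpk⟩ := hpoly i k
  obtain ⟨p', hp', hpk'⟩ := hpoly i' k'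
  intro h
  rw [← hpk, ← hpk', hb, ← map_add] at h
  have := congrArg (eval fun v => if v = Sum.inl () then (1 : ℂ) else 0)
    (IsFractionRing.injective _ (GF n m lam) h)
  simp [hp, hp'] at this

def cc'Of (g : ℕ → ℕ → GF n m lam) (i k : ℕ) : GF n m lam :=
  (RR n m lam i (g i k + hb n m lam) *
    ∏ l ∈ Icc 1 (m (i - 1)), (g i k + hb n m lam - g (i - 1) l - hb n m lam / 2)) /
  (2 * (g i k + 3 * hb n m lam / 2) *
    ∏ l ∈ (Icc 1 (m i)).erase k, ((g i k + hb n m lam) ^ 2 - (g i l + hb n m lam) ^ 2))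

theorem cc'_eq_cc'Of (i k : ℕ) : cc' n m lam i k = cc'Of (gam n m lam) i k := rfl

def shiftAt (g : ℕ → ℕ → GF n m lam) (a b : ℕ) (i k : ℕ) : GF n m lam :=
  g i k + if i = a ∧ k = b then hb n m lam else 0

section shiftAt

variable (g : ℕ → ℕ → GF n m lam) {a b i k : ℕ}

theorem shiftAt_self : shiftAt g a b a b = g a b + hb n m lam := by
  simp [shiftAt]

theorem shiftAt_of_ne (h : ¬(i = a ∧ k = b)) : shiftAt g a b i k = g i k := by
  simp [shiftAt, h]

theorem shiftAt_row_of_ne (h : i ≠ a) : shiftAt g a b i = g i :=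
  funext fun _ => shiftAt_of_ne g fun h' => h h'.1

theorem cc'Of_shiftAt_of_ne (ha : i ≠ a) (ha' : i - 1 ≠ a) :
    cc'Of (shiftAt g a b) i k = cc'Of g i k := by
  rw [cc'Of, shiftAt_row_of_ne g ha, shiftAt_row_of_ne g ha', cc'Of]

theorem cc'Of_shiftAt_prev_row (l : ℕ) (hk : k ∈ Icc 1 (m i)) :
    cc'Of (shiftAt g i k) (i + 1) l * (g (i + 1) l - g i k + hb n m lam / 2) =
      cc'Of g (i + 1) l * (g (i + 1) l - g i k - hb n m lam / 2) := by
  have hrest : ∀ u ∈ (Icc 1 (m i)).erase k, shiftAt g i k i u = g i u := fun u hu =>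
    shiftAt_of_ne g fun h => (mem_erase.mp hu).1 h.2
  rw [cc'Of, cc'Of, shiftAt_row_of_ne g (Nat.succ_ne_self i), Nat.add_sub_cancel,
    ← mul_prod_erase _ _ hk, ← mul_prod_erase _ _ hk, shiftAt_self,
    prod_congr rfl fun u hu => by rw [hrest u hu]]
  ring

def cc'OfExcept (i k l : ℕ) : GF n m lam :=
  (RR n m lam i (g i k + hb n m lam) *
    ∏ u ∈ Icc 1 (m (i - 1)), (g i k + hb n m lam - g (i - 1) u - hb n m lam / 2)) /
  (2 * (g i k + 3 * hb n m lam / 2) *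
    ∏ u ∈ ((Icc 1 (m i)).erase k).erase l,
      ((g i k + hb n m lam) ^ 2 - (g i u + hb n m lam) ^ 2))

theorem cc'Of_eq_cc'OfExcept_div {l : ℕ} (hl : l ∈ (Icc 1 (m i)).erase k) :
    cc'Of g i k =
      cc'OfExcept g i k l / ((g i k + hb n m lam) ^ 2 - (g i l + hb n m lam) ^ 2) := by
  rw [cc'Of, cc'OfExcept, ← mul_prod_erase _ _ hl, div_div]
  congr 1
  ring

theorem cc'Of_shiftAt_eq_cc'OfExcept_div (hi : i ≠ 0) {l : ℕ}
    (hl : l ∈ (Icc 1 (m i)).erase k) :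
    cc'Of (shiftAt g i l) i k = cc'OfExcept g i k l /
      ((g i k + hb n m lam) ^ 2 - (g i l + hb n m lam + hb n m lam) ^ 2) := by
  have hlk : l ≠ k := (mem_erase.mp hl).1
  have hrest : ∀ u ∈ ((Icc 1 (m i)).erase k).erase l, shiftAt g i l i u = g i u := fun u hu =>
    shiftAt_of_ne g fun h => (mem_erase.mp hu).1 h.2
  rw [cc'Of, cc'OfExcept, shiftAt_row_of_ne g (Nat.sub_one_lt hi).ne,
    shiftAt_of_ne g fun h => hlk h.2.symm, ← mul_prod_erase _ _ hl, shiftAt_self,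
    prod_congr (s₁ := ((Icc 1 (m i)).erase k).erase l) rfl fun u hu => by rw [hrest u hu],
    div_div]
  congr 1
  ring

theorem cc'Of_mul_cc'Of_shiftAt_same_row (hi : i ≠ 0) {l : ℕ} (hk : k ∈ Icc 1 (m i))
    (hl : l ∈ Icc 1 (m i)) (hkl : k ≠ l) (hsep : ∀ a b c d, g a b + hb n m lam ≠ g c d) :
    cc'Of g i k * cc'Of (shiftAt g i k) i l * (g i k - g i l + hb n m lam) =
      cc'Of g i l * cc'Of (shiftAt g i l) i k * (g i k - g i l - hb n m lam) := by
  have hlk : l ∈ (Icc 1 (m i)).erase k := mem_erase.mpr ⟨hkl.symm, hl⟩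
  have hkl' : k ∈ (Icc 1 (m i)).erase l := mem_erase.mpr ⟨hkl, hk⟩
  rw [cc'Of_eq_cc'OfExcept_div g hlk, cc'Of_eq_cc'OfExcept_div g hkl',
    cc'Of_shiftAt_eq_cc'OfExcept_div g hi hlk, cc'Of_shiftAt_eq_cc'OfExcept_div g hi hkl']
  linear_combination cc'OfExcept g i k l * cc'OfExcept g i l k *
    sub_add_div_div_eq_sub_sub_div_div (hsep i k i l) (hsep i l i k)

end shiftAt

theorem cc'Of_relation (g : ℕ → ℕ → GF n m lam) (hsep : ∀ a b c d, g a b + hb n m lam ≠ g c d)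
    {i k j l : ℕ} (hi : i ≠ 0) (hk : k ∈ Icc 1 (m i)) (hl : l ∈ Icc 1 (m j))
    (hne : (i, k) ≠ (j, l)) :
    cc'Of g i k * cc'Of (shiftAt g i k) j l *
        (g i k - g j l + (cartan i j : GF n m lam) * hb n m lam / 2) =
      cc'Of g j l * cc'Of (shiftAt g j l) i k *
        (g i k - g j l - (cartan i j : GF n m lam) * hb n m lam / 2) := by
  rcases eq_or_ne i j with rfl | hij
  · have hkl : k ≠ l := fun h => hne (by rw [h])
    rw [show ((cartan i i : ℤ) : GF n m lam) = 2 by simp [cartan]]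
    linear_combination cc'Of_mul_cc'Of_shiftAt_same_row g hi hk hl hkl hsep
  rcases eq_or_ne j (i + 1) with rfl | hj
  · rw [show ((cartan i (i + 1) : ℤ) : GF n m lam) = -1 by simp [cartan],
      cc'Of_shiftAt_of_ne g (i := i) (a := i + 1) (by omega) (by omega)]
    linear_combination -cc'Of g i k * cc'Of_shiftAt_prev_row g l hk
  rcases eq_or_ne i (j + 1) with rfl | hi'
  · rw [show ((cartan (j + 1) j : ℤ) : GF n m lam) = -1 by simp [cartan],
      cc'Of_shiftAt_of_ne g (i := j) (a := j + 1) (by omega) (by omega)]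
    linear_combination -cc'Of g j l * cc'Of_shiftAt_prev_row g k hl
  rw [show ((cartan i j : ℤ) : GF n m lam) = 0 by simp [cartan, hij]; omega,
    cc'Of_shiftAt_of_ne g (i := j) (a := i) (by omega) (by omega),
    cc'Of_shiftAt_of_ne g (i := i) (a := j) (by omega) (by omega)]
  ring

theorem kap'_mul_kap'_mul_Mop (σ : ℕ → ℕ → (GF n m lam ≃ₐ[ℂ] GF n m lam)) (i k j l : ℕ)
    (f : GF n m lam) :
    kap' n m lam σ i k * kap' n m lam σ j l * Mop n m lam f =
      Mop n m lam (cc' n m lam i k * σ i k (cc' n m lam j l) * σ i k (σ j l f)) *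
        ((σ i k).toLinearMap * (σ j l).toLinearMap) := by
  ext x
  simp only [kap', Mop, Module.End.mul_apply, LinearMap.mulLeft_apply,
    AlgEquiv.toLinearMap_apply, map_mul]
  ring

theorem map_cc'Of (φ : GF n m lam ≃ₐ[ℂ] GF n m lam) (hh : φ (hb n m lam) = hb n m lam)
    (hr : ∀ i t, φ (rv n m lam i t) = rv n m lam i t) (g : ℕ → ℕ → GF n m lam) (i k : ℕ) :
    φ (cc'Of g i k) = cc'Of (fun a b => φ (g a b)) i k := by
  simp only [cc'Of, RR, map_div₀, map_mul, map_prod, map_sub, map_add, map_pow, map_ofNat, hh,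
    hr]

theorem cc'Of_congr {g g' : ℕ → ℕ → GF n m lam} {i k : ℕ} (hk : k ∈ Icc 1 (m i))
    (hprev : ∀ u ∈ Icc 1 (m (i - 1)), g (i - 1) u = g' (i - 1) u)
    (hrow : ∀ u ∈ Icc 1 (m i), g i u = g' i u) :
    cc'Of g i k = cc'Of g' i k := by
  rw [cc'Of, cc'Of, hrow k hk, prod_congr rfl fun u hu => by rw [hprev u hu],
    prod_congr (s₁ := (Icc 1 (m i)).erase k) rfl fun u hu => by
      rw [hrow u (mem_of_mem_erase hu)]]

structure IsRaisingFamily (σ : ℕ → ℕ → (GF n m lam ≃ₐ[ℂ] GF n m lam)) : Prop where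
  map_hb : ∀ i k, σ i k (hb n m lam) = hb n m lam
  map_rv : ∀ i k i' t, σ i k (rv n m lam i' t) = rv n m lam i' t
  map_gam : ∀ i k i' k', 1 ≤ i' → i' ≤ n - 1 → 1 ≤ k' → k' ≤ m i' →
    σ i k (gam n m lam i' k') =
      if i' = i ∧ k' = k then gam n m lam i k + hb n m lam else gam n m lam i' k'

namespace IsRaisingFamily

variable {σ : ℕ → ℕ → (GF n m lam ≃ₐ[ℂ] GF n m lam)}

theorem apply_gam (hσ : IsRaisingFamily σ) (hm0 : m 0 = 0) (a b : ℕ) {i k : ℕ}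
    (hi : i ≤ n - 1) (hk : k ∈ Icc 1 (m i)) :
    σ a b (gam n m lam i k) = shiftAt (gam n m lam) a b i k := by
  obtain ⟨hk₁, hk₂⟩ := mem_Icc.mp hk
  have hi₀ : 1 ≤ i := Nat.one_le_iff_ne_zero.mpr fun h => by rw [h, hm0] at hk₂; omega
  rw [hσ.map_gam a b i k hi₀ hi hk₁ hk₂, shiftAt]
  split_ifs with h
  · rw [h.1, h.2]
  · rw [add_zero]

theorem apply_cc' (hσ : IsRaisingFamily σ) (hm0 : m 0 = 0) (a b : ℕ) {j l : ℕ}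
    (hj : j ≤ n - 1) (hl : l ∈ Icc 1 (m j)) :
    σ a b (cc' n m lam j l) = cc'Of (shiftAt (gam n m lam) a b) j l := by
  rw [cc'_eq_cc'Of, map_cc'Of _ (hσ.map_hb a b) (hσ.map_rv a b)]
  exact cc'Of_congr hl (fun u hu => hσ.apply_gam hm0 a b (by omega) hu)
    (fun u hu => hσ.apply_gam hm0 a b hj hu)

theorem toLinearMap_mul_comm (hσ : IsRaisingFamily σ) (hm0 : m 0 = 0) (hmn : m n = 0)
    (a b c d : ℕ) :
    (σ a b).toLinearMap * (σ c d).toLinearMap = (σ c d).toLinearMap * (σ a b).toLinearMap := by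
  have hshift : ∀ a' b' c' d' i k, i ≤ n - 1 → k ∈ Icc 1 (m i) →
      σ a' b' (σ c' d' (gam n m lam i k)) = shiftAt (shiftAt (gam n m lam) c' d') a' b' i k := by
    intro a' b' c' d' i k hi hk
    rw [hσ.apply_gam hm0 c' d' hi hk, shiftAt, map_add, hσ.apply_gam hm0 a' b' hi hk,
      apply_ite (σ a' b'), map_zero, hσ.map_hb]
    simp only [shiftAt]
    ring
  have hcomp :
      (σ a b : GF n m lam →ₐ[ℂ] GF n m lam).comp (σ c d : GF n m lam →ₐ[ℂ] GF n m lam) =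
        (σ c d : GF n m lam →ₐ[ℂ] GF n m lam).comp (σ a b : GF n m lam →ₐ[ℂ] GF n m lam) := by
    refine fractionRing_mvPolynomial_algHom_ext fun v => ?_
    rcases v with ⟨⟩ | ⟨⟨i, hi⟩, ⟨k, hk⟩⟩ | ⟨⟨i, hi⟩, ⟨t, ht⟩⟩
    · change σ a b (σ c d (hb n m lam)) = σ c d (σ a b (hb n m lam))
      rw [hσ.map_hb, hσ.map_hb, hσ.map_hb]
    · have hin : i ≠ n := by rintro rfl; rw [hmn] at hk; omega
      have hk' : k + 1 ∈ Icc 1 (m i) := mem_Icc.mpr ⟨by omega, hk⟩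
      simp only [AlgHom.comp_apply, AlgEquiv.coe_toAlgHom, algebraMap_X_gam,
        hshift _ _ _ _ i (k + 1) (by omega) hk']
      simp only [shiftAt]
      ring
    · simp only [AlgHom.comp_apply, AlgEquiv.coe_toAlgHom, algebraMap_X_rv, hσ.map_rv]
  ext x
  exact DFunLike.congr_fun hcomp x

end IsRaisingFamily

end GKLO

open GKLO Finset

theorem gklo_kappaP_kappaP_relation_general (n : ℕ) (m lam : ℕ → ℕ)
    (hm0 : m 0 = 0) (hmn : m n = 0)
    (σp : ℕ → ℕ → (GF n m lam ≃ₐ[ℂ] GF n m lam))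
    (hσph : ∀ i k, σp i k (hb n m lam) = hb n m lam)
    (hσpr : ∀ i k i' t, σp i k (rv n m lam i' t) = rv n m lam i' t)
    (hσpg : ∀ i k i' k', 1 ≤ i' → i' ≤ n - 1 → 1 ≤ k' → k' ≤ m i' →
      σp i k (gam n m lam i' k') =
        if i' = i ∧ k' = k then gam n m lam i k + hb n m lam else gam n m lam i' k')
    (i k j l : ℕ)
    (hi : 1 ≤ i) (hi' : i ≤ n - 1) (hk : 1 ≤ k) (hk' : k ≤ m i)
    (hj' : j ≤ n - 1) (hl : 1 ≤ l) (hl' : l ≤ m j)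
    (hne : (i, k) ≠ (j, l)) :
    kap' n m lam σp i k * kap' n m lam σp j l *
        Mop n m lam
          (gam n m lam i k - gam n m lam j l + (cartan i j : GF n m lam) * hb n m lam / 2) =
      kap' n m lam σp j l * kap' n m lam σp i k *
        Mop n m lam
          (gam n m lam i k - gam n m lam j l - (cartan i j : GF n m lam) * hb n m lam / 2) := by
  have hσ : IsRaisingFamily σp := ⟨hσph, hσpr, hσpg⟩
  have hik : k ∈ Icc 1 (m i) := mem_Icc.mpr ⟨hk, hk'⟩
  have hjl : l ∈ Icc 1 (m j) := mem_Icc.mpr ⟨hl, hl'⟩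
  have hji : ¬(j = i ∧ l = k) := fun h => hne (by rw [h.1, h.2])
  have hij : ¬(i = j ∧ k = l) := fun h => hne (by rw [h.1, h.2])
  rw [kap'_mul_kap'_mul_Mop, kap'_mul_kap'_mul_Mop, hσ.toLinearMap_mul_comm hm0 hmn j l i k]
  congr 2
  rw [hσ.apply_cc' hm0 i k hj' hjl, hσ.apply_cc' hm0 j l hi' hik]
  simp only [map_add, map_sub, map_mul, map_div₀, map_intCast, map_ofNat, hσph,
    hσ.apply_gam hm0 _ _ hi' hik, hσ.apply_gam hm0 _ _ hj' hjl, shiftAt_self,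
    shiftAt_of_ne (gam n m lam) hji, shiftAt_of_ne (gam n m lam) hij, cc'_eq_cc'Of]
  linear_combination cc'Of_relation (gam n m lam) gam_add_hb_ne (by omega) hik hjl hne

theorem gklo_kappaP_kappaP_relation (n : ℕ) (hn : 2 ≤ n) (m lam : ℕ → ℕ)
    (hm0 : m 0 = 0) (hmn : m n = 0) (hlam0 : lam 0 = 0) (hlamn : lam n = 0)
    (σm σp : ℕ → ℕ → (GF n m lam ≃ₐ[ℂ] GF n m lam))
    (hσmh : ∀ i k, σm i k (hb n m lam) = hb n m lam)
    (hσph : ∀ i k, σp i k (hb n m lam) = hb n m lam)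
    (hσmr : ∀ i k i' t, σm i k (rv n m lam i' t) = rv n m lam i' t)
    (hσpr : ∀ i k i' t, σp i k (rv n m lam i' t) = rv n m lam i' t)
    (hσmg : ∀ i k i' k', 1 ≤ i' → i' ≤ n - 1 → 1 ≤ k' → k' ≤ m i' →
      σm i k (gam n m lam i' k') =
        if i' = i ∧ k' = k then gam n m lam i k - hb n m lam else gam n m lam i' k')
    (hσpg : ∀ i k i' k', 1 ≤ i' → i' ≤ n - 1 → 1 ≤ k' → k' ≤ m i' →
      σp i k (gam n m lam i' k') =
        if i' = i ∧ k' = k then gam n m lam i k + hb n m lam else gam n m lam i' k')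
    (i k j l : ℕ)
    (hi : 1 ≤ i) (hi' : i ≤ n - 1) (hk : 1 ≤ k) (hk' : k ≤ m i)
    (hj : 1 ≤ j) (hj' : j ≤ n - 1) (hl : 1 ≤ l) (hl' : l ≤ m j)
    (hne : (i, k) ≠ (j, l)) :
    kap' n m lam σp i k * kap' n m lam σp j l *
        Mop n m lam
          (gam n m lam i k - gam n m lam j l + (cartan i j : GF n m lam) * hb n m lam / 2) =
      kap' n m lam σp j l * kap' n m lam σp i k *
        Mop n m lam
          (gam n m lam i k - gam n m lam j l - (cartan i j : GF n m lam) * hb n m lam / 2) :=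
  gklo_kappaP_kappaP_relation_general n m lam hm0 hmn σp hσph hσpr hσpg i k j l hi hi' hk hk' hj' hl
    hl' hne
end
end

section
/- With the twisted GKLO operators κ_{i,k}, κ'_{j,l} as in the context: for all pairs (i,k) ≠ (j,l) (with i, j ∈ I, 1 ≤ k ≤ m_i, 1 ≤ l ≤ m_j), the following identity of ℂ-linear endomorphisms of F holds: M(γ_{i,k} + γ_{j,l} + (1 − ½ a_{ij}) ℏ) ∘ κ_{i,k} ∘ κ'_{j,l} = M(γ_{i,k} + γ_{j,l} + (1 + ½ a_{ij}) ℏ) ∘ κ'_{j,l} ∘ κ_{i,k}. -/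
/- Twisted GKLO representation setup (type AI).
   Indices: `i ∈ I = {1,…,n−1}`, `1 ≤ k ≤ m i`, with conventions `m 0 = m n = 0`
   (and `lam 0 = lam n = 0`), so that the indeterminates are exactly
   `ℏ`, `γ_{i,k}` (`i ∈ I`, `1 ≤ k ≤ m i`), `r_{i,t}` (`i ∈ I`, `1 ≤ t ≤ lam i`). -/

noncomputable section

/-!
Both sides are multiplication operators composed with `σ⁻_{i,k} σ⁺_{j,l}`, resp.
`σ⁺_{j,l} σ⁻_{i,k}`. These automorphisms commute, since each moves every generator of `F` by a
multiple of `ℏ`; so the relation reduces to the scalar identity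
`a · c_{i,k} · σ⁻_{i,k}(c'_{j,l}) = b · c'_{j,l} · σ⁺_{j,l}(c_{i,k})`, with `a`, `b` the two linear
prefactors. Regarded as functions of the family `γ`, the shifts change one entry of `γ`, hence at
most one factor of each coefficient. For `|i - j| = 1` that factor lies in a numerator and the
identity is polynomial; for `i = j` it lies in a denominator, and the identity follows after
cancelling `γ_{i,k} + γ_{i,l}` and `γ_{i,k} + γ_{i,l} + 2ℏ`, which are nonzero in `F`.
-/

open Finset Function

theorem Finset.prod_apply_update_of_mem {ι α β : Type*} [DecidableEq ι] [CommMonoid β]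
    {s : Finset ι} {i : ι} (hi : i ∈ s) (f : ι → α) (b : α) (φ : α → β) :
    ∏ x ∈ s, φ (update f i b x) = φ b * ∏ x ∈ s.erase i, φ (f x) := by
  rw [← mul_prod_erase s _ hi, update_self]
  congr 1
  exact prod_congr rfl fun x hx => by rw [update_of_ne (ne_of_mem_erase hx)]

section KappaCoeff

variable {F : Type*} [Field F] (m lam : ℕ → ℕ) (γ : ℕ → ℕ → F) (ℏ : F) (r : ℕ → ℕ → F)

/-- `c_{i,k}` as a function of the values `γ`, `ℏ` of the indeterminates, so that an automorphism
acts on it through `γ ↦ σ ∘ γ`. -/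
def kappaCoeff (i k : ℕ) : F :=
  ((∏ l ∈ Icc 1 (m (i + 1)), (γ i k ^ 2 - (γ (i + 1) l + ℏ / 2) ^ 2)) *
    ∏ l ∈ Icc 1 (m (i - 1)), (γ i k + γ (i - 1) l + ℏ / 2)) /
  (2 * (γ i k - ℏ / 2) * ∏ l ∈ (Icc 1 (m i)).erase k, (γ i k ^ 2 - γ i l ^ 2))

def kappaCoeff' (i k : ℕ) : F :=
  ((∏ t ∈ Icc 1 (lam i), ((γ i k + ℏ) ^ 2 - r i t ^ 2)) *
    ∏ l ∈ Icc 1 (m (i - 1)), (γ i k + ℏ - γ (i - 1) l - ℏ / 2)) /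
  (2 * (γ i k + 3 * ℏ / 2) *
    ∏ l ∈ (Icc 1 (m i)).erase k, ((γ i k + ℏ) ^ 2 - (γ i l + ℏ) ^ 2))

variable {m lam γ ℏ r} {i k j l : ℕ}

section Map

variable {F' Φ : Type*} [Field F'] [FunLike Φ F F'] [RingHomClass Φ F F'] (φ : Φ)
  {γ' : ℕ → ℕ → F'}

theorem map_kappaCoeff (hγ : ∀ a x, 1 ≤ x → φ (γ a x) = γ' a x) (hk : 1 ≤ k) :
    φ (kappaCoeff m γ ℏ i k) = kappaCoeff m γ' (φ ℏ) i k := by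
  simp only [kappaCoeff, map_div₀, map_mul, map_prod, map_sub, map_add, map_pow, map_ofNat,
    hγ _ _ hk]
  congr 2 <;> refine prod_congr rfl fun x hx => ?_ <;>
    rw [hγ _ x (by simp only [mem_Icc, mem_erase] at hx; omega)]

theorem map_kappaCoeff' {r' : ℕ → ℕ → F'} (hγ : ∀ a x, 1 ≤ x → φ (γ a x) = γ' a x)
    (hr : ∀ a t, φ (r a t) = r' a t) (hk : 1 ≤ k) :
    φ (kappaCoeff' m lam γ ℏ r i k) = kappaCoeff' m lam γ' (φ ℏ) r' i k := by
  simp only [kappaCoeff', map_div₀, map_mul, map_prod, map_sub, map_add, map_pow, map_ofNat,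
    hγ _ _ hk, hr]
  congr 2 <;> refine prod_congr rfl fun x hx => ?_ <;>
    rw [hγ _ x (by simp only [mem_Icc, mem_erase] at hx; omega)]

end Map

theorem kappaCoeff_update_of_ne (f : ℕ → F) (h₁ : i - 1 ≠ j) (h₂ : i ≠ j) (h₃ : i + 1 ≠ j) :
    kappaCoeff m (update γ j f) ℏ i k = kappaCoeff m γ ℏ i k := by
  simp only [kappaCoeff, update_of_ne h₁, update_of_ne h₂, update_of_ne h₃]

theorem kappaCoeff'_update_of_ne (f : ℕ → F) (h₁ : j - 1 ≠ i) (h₂ : j ≠ i) :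
    kappaCoeff' m lam (update γ i f) ℏ r j l = kappaCoeff' m lam γ ℏ r j l := by
  simp only [kappaCoeff', update_of_ne h₁, update_of_ne h₂]

theorem kappaCoeff_exchange_self_aux {x y A B C D E G : F} (h0 : x + y ≠ 0)
    (h2 : x + y + 2 * ℏ ≠ 0) :
    (x + y) * (A / (C * ((x ^ 2 - y ^ 2) * E))) * (B / (D * (((y + ℏ) ^ 2 - x ^ 2) * G))) =
      (x + y + 2 * ℏ) * (B / (D * (((y + ℏ) ^ 2 - (x + ℏ) ^ 2) * G))) *
        (A / (C * ((x ^ 2 - (y + ℏ) ^ 2) * E))) := by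
  have hA : (x + y) * (A / (C * ((x ^ 2 - y ^ 2) * E))) = A / (C * ((x - y) * E)) := by
    rw [← mul_div_assoc, show C * ((x ^ 2 - y ^ 2) * E) = (x + y) * (C * ((x - y) * E)) by ring,
      mul_div_mul_left _ _ h0]
  have hB : (x + y + 2 * ℏ) * (B / (D * (((y + ℏ) ^ 2 - (x + ℏ) ^ 2) * G))) =
      B / (D * ((y - x) * G)) := by
    rw [← mul_div_assoc,
      show D * (((y + ℏ) ^ 2 - (x + ℏ) ^ 2) * G) = (x + y + 2 * ℏ) * (D * ((y - x) * G)) by ring,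
      mul_div_mul_left _ _ h2]
  rw [hA, hB, div_mul_div_comm, div_mul_div_comm]
  congr 1 <;> ring

theorem kappaCoeff_exchange_self (hi : 1 ≤ i) (hk : k ∈ Icc 1 (m i)) (hl : l ∈ Icc 1 (m i))
    (hkl : k ≠ l) (h0 : γ i k + γ i l ≠ 0) (h2 : γ i k + γ i l + 2 * ℏ ≠ 0) :
    (γ i k + γ i l) * kappaCoeff m γ ℏ i k *
        kappaCoeff' m lam (update γ i (update (γ i) k (γ i k - ℏ))) ℏ r i l =
      (γ i k + γ i l + 2 * ℏ) * kappaCoeff' m lam γ ℏ r i l *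
        kappaCoeff m (update γ i (update (γ i) l (γ i l + ℏ))) ℏ i k := by
  have hkl' : k ∈ (Icc 1 (m i)).erase l := mem_erase.2 ⟨hkl, hk⟩
  have hlk' : l ∈ (Icc 1 (m i)).erase k := mem_erase.2 ⟨hkl.symm, hl⟩
  simp only [kappaCoeff, kappaCoeff', update_self, update_of_ne (show i - 1 ≠ i by omega),
    update_of_ne (show i + 1 ≠ i by omega), update_of_ne hkl, update_of_ne hkl.symm]
  rw [prod_apply_update_of_mem hkl' _ _ fun y => (γ i l + ℏ) ^ 2 - (y + ℏ) ^ 2,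
    prod_apply_update_of_mem hlk' _ _ fun y => γ i k ^ 2 - y ^ 2,
    ← mul_prod_erase _ _ hkl', ← mul_prod_erase _ _ hlk', erase_right_comm, sub_add_cancel]
  exact kappaCoeff_exchange_self_aux h0 h2

variable [CharZero F]

theorem kappaCoeff_exchange_succ (hk : k ∈ Icc 1 (m i)) (hl : l ∈ Icc 1 (m (i + 1))) :
    (γ i k + γ (i + 1) l + 3 / 2 * ℏ) * kappaCoeff m γ ℏ i k *
        kappaCoeff' m lam (update γ i (update (γ i) k (γ i k - ℏ))) ℏ r (i + 1) l =
      (γ i k + γ (i + 1) l + ℏ / 2) * kappaCoeff' m lam γ ℏ r (i + 1) l *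
        kappaCoeff m (update γ (i + 1) (update (γ (i + 1)) l (γ (i + 1) l + ℏ))) ℏ i k := by
  simp only [kappaCoeff, kappaCoeff', Nat.add_sub_cancel, update_self,
    update_of_ne (show i - 1 ≠ i + 1 by omega), update_of_ne (show i ≠ i + 1 by omega),
    update_of_ne (show i + 1 ≠ i by omega)]
  rw [prod_apply_update_of_mem hl _ _ fun y => γ i k ^ 2 - (y + ℏ / 2) ^ 2,
    prod_apply_update_of_mem hk _ _ fun y => γ (i + 1) l + ℏ - y - ℏ / 2,
    ← mul_prod_erase _ _ hl, ← mul_prod_erase _ _ hk]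
  ring

theorem kappaCoeff_exchange_pred (hl : l ∈ Icc 1 (m j)) :
    (γ (j + 1) k + γ j l + 3 / 2 * ℏ) * kappaCoeff m γ ℏ (j + 1) k *
        kappaCoeff' m lam (update γ (j + 1) (update (γ (j + 1)) k (γ (j + 1) k - ℏ))) ℏ r j l =
      (γ (j + 1) k + γ j l + ℏ / 2) * kappaCoeff' m lam γ ℏ r j l *
        kappaCoeff m (update γ j (update (γ j) l (γ j l + ℏ))) ℏ (j + 1) k := by
  rw [kappaCoeff'_update_of_ne _ (by omega) (by omega)]
  simp only [kappaCoeff, Nat.add_sub_cancel, update_self,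
    update_of_ne (show j + 1 + 1 ≠ j by omega), update_of_ne (show j + 1 ≠ j by omega)]
  rw [prod_apply_update_of_mem hl _ _ fun y => γ (j + 1) k + y + ℏ / 2, ← mul_prod_erase _ _ hl]
  ring

theorem kappaCoeff_exchange (hi : 1 ≤ i) (hk : k ∈ Icc 1 (m i)) (hl : l ∈ Icc 1 (m j))
    (hne : (i, k) ≠ (j, l)) (h0 : γ i k + γ j l ≠ 0) (h2 : γ i k + γ j l + 2 * ℏ ≠ 0) :
    (γ i k + γ j l + (1 - (cartan i j : F) / 2) * ℏ) * kappaCoeff m γ ℏ i k *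
        kappaCoeff' m lam (update γ i (update (γ i) k (γ i k - ℏ))) ℏ r j l =
      (γ i k + γ j l + (1 + (cartan i j : F) / 2) * ℏ) * kappaCoeff' m lam γ ℏ r j l *
        kappaCoeff m (update γ j (update (γ j) l (γ j l + ℏ))) ℏ i k := by
  obtain rfl | rfl | rfl | hij : i = j ∨ j = i + 1 ∨ i = j + 1 ∨ (i + 1 < j ∨ j + 1 < i) := by
    omega
  · have hkl : k ≠ l := fun h => hne (by rw [h])
    rw [show cartan i i = 2 by simp [cartan]]
    convert kappaCoeff_exchange_self (lam := lam) (r := r) hi hk hl hkl h0 h2 using 3 <;> ring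
  · rw [show cartan i (i + 1) = -1 by simp [cartan]]
    convert kappaCoeff_exchange_succ (lam := lam) (r := r) (γ := γ) (ℏ := ℏ) hk hl using 3 <;>
      push_cast <;> ring
  · rw [show cartan (j + 1) j = -1 by simp [cartan]]
    convert kappaCoeff_exchange_pred (lam := lam) (r := r) (γ := γ) (ℏ := ℏ) (k := k) hl
      using 3 <;> push_cast <;> ring
  · rw [kappaCoeff_update_of_ne _ (by omega) (by omega) (by omega),
      kappaCoeff'_update_of_ne _ (by omega) (by omega),
      show cartan i j = 0 by simp only [cartan]; split_ifs <;> omega]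
    ring

end KappaCoeff

theorem exists_update_update_eq_add_smul {ι κ K A : Type*} [DecidableEq ι] [DecidableEq κ]
    [Semiring K] [AddCommMonoid A] [Module K A] {f : ι → κ → A} {i : ι} {k : κ} {v h : A}
    (hv : ∃ c : K, v = f i k + c • h) (a : ι) (x : κ) :
    ∃ c : K, update f i (update (f i) k v) a x = f a x + c • h := by
  obtain ⟨c, rfl⟩ := hv
  by_cases ha : a = i
  · subst ha
    by_cases hx : x = k
    · exact ⟨c, by simp [hx]⟩
    · exact ⟨0, by simp [hx]⟩
  · exact ⟨0, by simp [ha]⟩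

theorem AlgEquiv.apply_apply_comm_of_add_smul {K A : Type*} [CommSemiring K] [Semiring A]
    [Algebra K A] {σ τ : A ≃ₐ[K] A} {h x : A} (hσh : σ h = h) (hτh : τ h = h)
    (hσ : ∃ c : K, σ x = x + c • h) (hτ : ∃ c : K, τ x = x + c • h) : σ (τ x) = τ (σ x) := by
  obtain ⟨c, hc⟩ := hσ
  obtain ⟨d, hd⟩ := hτ
  rw [hd, map_add, map_smul, hc, hσh, map_add, map_smul, hd, hτh, add_right_comm]

theorem FractionRing.algHom_ext_mvPolynomial {ι K L : Type*} [Field K] [Field L] [Algebra K L]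
    {φ ψ : FractionRing (MvPolynomial ι K) →ₐ[K] L}
    (h : ∀ v, φ (algebraMap (MvPolynomial ι K) _ (MvPolynomial.X v)) =
      ψ (algebraMap (MvPolynomial ι K) _ (MvPolynomial.X v))) :
    φ = ψ := by
  refine AlgHom.coe_ringHom_injective
    (IsFractionRing.ringHom_ext (A := MvPolynomial ι K) fun p => ?_)
  have := MvPolynomial.algHom_ext (f := φ.comp (IsScalarTower.toAlgHom K _ _))
    (g := ψ.comp (IsScalarTower.toAlgHom K _ _)) fun v => h v
  exact DFunLike.congr_fun this p

theorem LinearMap.mulLeft_mul_mulLeft_comp_comm {K A : Type*} [CommSemiring K] [CommSemiring A]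
    [Algebra K A] {σ τ : A ≃ₐ[K] A} (hστ : ∀ x, σ (τ x) = τ (σ x)) {a b c d : A}
    (h : a * c * σ d = b * d * τ c) :
    mulLeft K a * (mulLeft K c * σ.toLinearMap) * (mulLeft K d * τ.toLinearMap) =
      mulLeft K b * (mulLeft K d * τ.toLinearMap) * (mulLeft K c * σ.toLinearMap) := by
  ext x
  simp only [Module.End.mul_apply, mulLeft_apply, AlgEquiv.toLinearMap_apply, map_mul, hστ]
  calc _ = a * c * σ d * τ (σ x) := by ring
    _ = b * d * τ c * τ (σ x) := by rw [h]
    _ = _ := by ring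

theorem MvPolynomial.X_add_X_add_C_mul_X_ne_zero {σ R : Type*} [CommRing R] [Nontrivial R]
    {a b e : σ} (hab : a ≠ b) (hae : a ≠ e) (c : R) :
    (X a + X b + C c * X e : MvPolynomial σ R) ≠ 0 := by
  classical
  intro h
  simpa [hab.symm, hae.symm] using congrArg (MvPolynomial.eval fun v => if v = a then 1 else 0) h

section GF

variable {n : ℕ} {m lam : ℕ → ℕ}

theorem gam_eq_algebraMap_X {i k : ℕ} (hi : i < n + 1) (hk : k - 1 < m i) :
    gam n m lam i k = algebraMap (MvPolynomial (GVar n m lam) ℂ) (GF n m lam)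
      (MvPolynomial.X (Sum.inr (Sum.inl ⟨⟨i, hi⟩, ⟨k - 1, hk⟩⟩))) :=
  dif_pos ⟨hi, hk⟩

theorem algebraMap_X_gam (a : Fin (n + 1)) (b : Fin (m a)) :
    algebraMap (MvPolynomial (GVar n m lam) ℂ) (GF n m lam)
      (MvPolynomial.X (Sum.inr (Sum.inl ⟨a, b⟩))) = gam n m lam a (b + 1) := by
  rw [gam_eq_algebraMap_X a.isLt (by simp)]
  rfl

theorem algebraMap_X_rv (a : Fin (n + 1)) (b : Fin (lam a)) :
    algebraMap (MvPolynomial (GVar n m lam) ℂ) (GF n m lam)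
      (MvPolynomial.X (Sum.inr (Sum.inr ⟨a, b⟩))) = rv n m lam a (b + 1) := by
  rw [rv, dif_pos ⟨a.isLt, by simp⟩]
  rfl

theorem gam_add_gam_add_smul_hb_ne_zero {i k j l : ℕ} (hi : i < n + 1) (hk : k ∈ Icc 1 (m i))
    (hj : j < n + 1) (hl : l ∈ Icc 1 (m j)) (hne : (i, k) ≠ (j, l)) (c : ℂ) :
    gam n m lam i k + gam n m lam j l + c • hb n m lam ≠ 0 := by
  rw [mem_Icc] at hk hl
  have hsmul : c • hb n m lam = algebraMap (MvPolynomial (GVar n m lam) ℂ) (GF n m lam)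
      (MvPolynomial.C c * MvPolynomial.X (Sum.inl ())) := by
    rw [map_mul, ← MvPolynomial.algebraMap_eq, ← IsScalarTower.algebraMap_apply, Algebra.smul_def,
      hb]
  rw [gam_eq_algebraMap_X hi (by omega), gam_eq_algebraMap_X hj (by omega), hsmul, ← map_add,
    ← map_add, map_ne_zero_iff _ (IsFractionRing.injective _ _)]
  refine MvPolynomial.X_add_X_add_C_mul_X_ne_zero (fun h => hne ?_) (by simp) c
  obtain ⟨rfl, h⟩ := by simpa using h
  have hkl : k - 1 = l - 1 := Fin.val_eq_of_eq (eq_of_heq h)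
  rw [show k = l by omega]

/-- Because of the truncated subtraction in `gam`, `gam a 0 = gam a 1`; hence the restriction to
`1 ≤ x`. -/
theorem apply_gam_eq_update (hm0 : m 0 = 0) (hmn : m n = 0) (σ : GF n m lam ≃ₐ[ℂ] GF n m lam)
    {i k : ℕ} (hi : i ≤ n - 1) (hk : k ≤ m i) {v : GF n m lam}
    (hσ : ∀ a x, 1 ≤ a → a ≤ n - 1 → 1 ≤ x → x ≤ m a →
      σ (gam n m lam a x) = if a = i ∧ x = k then v else gam n m lam a x)
    (a x : ℕ) (hx : 1 ≤ x) :
    σ (gam n m lam a x) = update (gam n m lam) i (update (gam n m lam i) k v) a x := by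
  by_cases hv : a < n + 1 ∧ x - 1 < m a
  · have ha0 : a ≠ 0 := by rintro rfl; rw [hm0] at hv; omega
    have han : a ≠ n := by rintro rfl; rw [hmn] at hv; omega
    rw [hσ a x (by omega) (by omega) hx (by omega)]
    by_cases ha : a = i
    · subst ha; by_cases hxk : x = k <;> simp [hxk]
    · simp [ha]
  · have hzero : gam n m lam a x = 0 := dif_neg hv
    by_cases ha : a = i
    · subst ha
      rw [update_self, update_of_ne (by rintro rfl; omega), hzero, map_zero]
    · rw [update_of_ne ha, hzero, map_zero]

theorem apply_apply_comm_of_translates (σ τ : GF n m lam ≃ₐ[ℂ] GF n m lam)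
    (hσh : σ (hb n m lam) = hb n m lam) (hτh : τ (hb n m lam) = hb n m lam)
    (hσr : ∀ a t, σ (rv n m lam a t) = rv n m lam a t)
    (hτr : ∀ a t, τ (rv n m lam a t) = rv n m lam a t)
    (hσg : ∀ a x, 1 ≤ x → ∃ c : ℂ, σ (gam n m lam a x) = gam n m lam a x + c • hb n m lam)
    (hτg : ∀ a x, 1 ≤ x → ∃ c : ℂ, τ (gam n m lam a x) = gam n m lam a x + c • hb n m lam)
    (x : GF n m lam) : σ (τ x) = τ (σ x) := by
  have key : σ.toAlgHom.comp τ.toAlgHom = τ.toAlgHom.comp σ.toAlgHom := by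
    refine FractionRing.algHom_ext_mvPolynomial fun v => ?_
    simp only [AlgHom.comp_apply, AlgEquiv.coe_toAlgHom]
    rcases v with _ | ⟨a, b⟩ | ⟨a, b⟩
    · exact AlgEquiv.apply_apply_comm_of_add_smul (x := hb n m lam) hσh hτh ⟨0, by simp [hσh]⟩
        ⟨0, by simp [hτh]⟩
    · rw [algebraMap_X_gam]
      exact AlgEquiv.apply_apply_comm_of_add_smul hσh hτh (hσg _ _ (by omega)) (hτg _ _ (by omega))
    · rw [algebraMap_X_rv, hσr, hτr, hσr]
  exact DFunLike.congr_fun key x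

theorem cc_eq_kappaCoeff (i k : ℕ) :
    cc n m lam i k = kappaCoeff m (gam n m lam) (hb n m lam) i k :=
  rfl

theorem cc'_eq_kappaCoeff' (i k : ℕ) :
    cc' n m lam i k = kappaCoeff' m lam (gam n m lam) (hb n m lam) (rv n m lam) i k :=
  rfl

end GF

theorem gklo_kappa_kappaP_relation_general (n : ℕ) (m lam : ℕ → ℕ)
    (hm0 : m 0 = 0) (hmn : m n = 0)
    (σm σp : ℕ → ℕ → (GF n m lam ≃ₐ[ℂ] GF n m lam))
    (hσmh : ∀ i k, σm i k (hb n m lam) = hb n m lam)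
    (hσph : ∀ i k, σp i k (hb n m lam) = hb n m lam)
    (hσmr : ∀ i k i' t, σm i k (rv n m lam i' t) = rv n m lam i' t)
    (hσpr : ∀ i k i' t, σp i k (rv n m lam i' t) = rv n m lam i' t)
    (hσmg : ∀ i k i' k', 1 ≤ i' → i' ≤ n - 1 → 1 ≤ k' → k' ≤ m i' →
      σm i k (gam n m lam i' k') =
        if i' = i ∧ k' = k then gam n m lam i k - hb n m lam else gam n m lam i' k')
    (hσpg : ∀ i k i' k', 1 ≤ i' → i' ≤ n - 1 → 1 ≤ k' → k' ≤ m i' →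
      σp i k (gam n m lam i' k') =
        if i' = i ∧ k' = k then gam n m lam i k + hb n m lam else gam n m lam i' k')
    (i k j l : ℕ)
    (hi : 1 ≤ i) (hi' : i ≤ n - 1) (hk : 1 ≤ k) (hk' : k ≤ m i)
    (hj' : j ≤ n - 1) (hl : 1 ≤ l) (hl' : l ≤ m j)
    (hne : (i, k) ≠ (j, l)) :
    Mop n m lam
        (gam n m lam i k + gam n m lam j l +
          (1 - (cartan i j : GF n m lam) / 2) * hb n m lam) *
        kap n m lam σm i k * kap' n m lam σp j l =
      Mop n m lam
        (gam n m lam i k + gam n m lam j l +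
          (1 + (cartan i j : GF n m lam) / 2) * hb n m lam) *
        kap' n m lam σp j l * kap n m lam σm i k := by
  have hkI : k ∈ Icc 1 (m i) := mem_Icc.2 ⟨hk, hk'⟩
  have hlI : l ∈ Icc 1 (m j) := mem_Icc.2 ⟨hl, hl'⟩
  have hσm := apply_gam_eq_update hm0 hmn (σm i k) hi' hk' (hσmg i k)
  have hσp := apply_gam_eq_update hm0 hmn (σp j l) hj' hl' (hσpg j l)
  have hcomm := apply_apply_comm_of_translates (σm i k) (σp j l) (hσmh i k) (hσph j l)
    (hσmr i k) (hσpr j l)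
    (fun a x hx => hσm a x hx ▸ exists_update_update_eq_add_smul ⟨-1, by simp [sub_eq_add_neg]⟩ a x)
    (fun a x hx => hσp a x hx ▸ exists_update_update_eq_add_smul ⟨1, by simp⟩ a x)
  refine LinearMap.mulLeft_mul_mulLeft_comp_comm hcomm ?_
  rw [cc_eq_kappaCoeff, cc'_eq_kappaCoeff', map_kappaCoeff' (σm i k) hσm (hσmr i k) hl,
    map_kappaCoeff (σp j l) hσp hk, hσmh, hσph]
  have hne0 := gam_add_gam_add_smul_hb_ne_zero (n := n) (lam := lam) (by omega) hkI (by omega)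
    hlI hne
  exact kappaCoeff_exchange hi hkI hlI hne (by simpa using hne0 0)
    (by simpa [Algebra.smul_def, map_ofNat] using hne0 2)

theorem gklo_kappa_kappaP_relation (n : ℕ) (hn : 2 ≤ n) (m lam : ℕ → ℕ)
    (hm0 : m 0 = 0) (hmn : m n = 0) (hlam0 : lam 0 = 0) (hlamn : lam n = 0)
    (σm σp : ℕ → ℕ → (GF n m lam ≃ₐ[ℂ] GF n m lam))
    (hσmh : ∀ i k, σm i k (hb n m lam) = hb n m lam)
    (hσph : ∀ i k, σp i k (hb n m lam) = hb n m lam)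
    (hσmr : ∀ i k i' t, σm i k (rv n m lam i' t) = rv n m lam i' t)
    (hσpr : ∀ i k i' t, σp i k (rv n m lam i' t) = rv n m lam i' t)
    (hσmg : ∀ i k i' k', 1 ≤ i' → i' ≤ n - 1 → 1 ≤ k' → k' ≤ m i' →
      σm i k (gam n m lam i' k') =
        if i' = i ∧ k' = k then gam n m lam i k - hb n m lam else gam n m lam i' k')
    (hσpg : ∀ i k i' k', 1 ≤ i' → i' ≤ n - 1 → 1 ≤ k' → k' ≤ m i' →
      σp i k (gam n m lam i' k') =
        if i' = i ∧ k' = k then gam n m lam i k + hb n m lam else gam n m lam i' k')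
    (i k j l : ℕ)
    (hi : 1 ≤ i) (hi' : i ≤ n - 1) (hk : 1 ≤ k) (hk' : k ≤ m i)
    (hj : 1 ≤ j) (hj' : j ≤ n - 1) (hl : 1 ≤ l) (hl' : l ≤ m j)
    (hne : (i, k) ≠ (j, l)) :
    Mop n m lam
        (gam n m lam i k + gam n m lam j l +
          (1 - (cartan i j : GF n m lam) / 2) * hb n m lam) *
        kap n m lam σm i k * kap' n m lam σp j l =
      Mop n m lam
        (gam n m lam i k + gam n m lam j l +
          (1 + (cartan i j : GF n m lam) / 2) * hb n m lam) *
        kap' n m lam σp j l * kap n m lam σm i k :=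
  gklo_kappa_kappaP_relation_general n m lam hm0 hmn σm σp hσmh hσph hσmr hσpr hσmg hσpg i k j l hi
    hi' hk hk' hj' hl hl' hne
end
end

section
/- With the twisted GKLO operators as in the context: for every i ∈ I and 1 ≤ k ≤ m_i, the composition κ_{i,k} ∘ κ'_{i,k} is the multiplication operator M(f), where f = R_i(γ_{i,k}) · ∏_{j ∈ {i−1,i+1}} ∏_{l=1}^{m_j}(γ_{i,k}² − (γ_{j,l} + ½ℏ)²) / [4(γ_{i,k} − ½ℏ)(γ_{i,k} + ½ℏ) · ∏_{1≤l≤m_i, l≠k}(γ_{i,k}² − γ_{i,l}²)(γ_{i,k}² − ξ_{i,l}²)]. -/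
/- Twisted GKLO representation setup (type AI).
   Indices: `i ∈ I = {1,…,n−1}`, `1 ≤ k ≤ m i`, with conventions `m 0 = m n = 0`
   (and `lam 0 = lam n = 0`), so that the indeterminates are exactly
   `ℏ`, `γ_{i,k}` (`i ∈ I`, `1 ≤ k ≤ m i`), `r_{i,t}` (`i ∈ I`, `1 ≤ t ≤ lam i`). -/

noncomputable section

/-!
The composite is `M(c) ∘ σ⁻ ∘ M(c') ∘ σ⁺ = M(c · σ⁻(c')) ∘ σ⁻ ∘ σ⁺`, and `σ⁻ ∘ σ⁺ = id` because
both are `ℂ`-algebra maps of a fraction field of a polynomial ring that agree on the indeterminates.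
Applying `σ⁻` to `c'` turns `ξ_{i,k}` into `γ_{i,k}` and `γ_{i,k} + 3ℏ/2` into `γ_{i,k} + ℏ/2`;
the remaining factors pair up as `(γ + a)(γ − a) = γ² − a²` with `a = γ_{i−1,l} + ℏ/2`.
-/

theorem FractionRing.mvPolynomial_algHom_ext {R σ B : Type*} [CommRing R] [Semiring B]
    [Algebra R B] {f g : FractionRing (MvPolynomial σ R) →ₐ[R] B}
    (h : ∀ v, f (algebraMap (MvPolynomial σ R) _ (MvPolynomial.X v)) =
      g (algebraMap (MvPolynomial σ R) _ (MvPolynomial.X v))) :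
    f = g :=
  Localization.algHom_ext _ (MvPolynomial.algHom_ext h)

theorem Finset.prod_add_mul_prod_sub {ι R : Type*} [CommRing R] (s : Finset ι) (a : R)
    (b : ι → R) : (∏ l ∈ s, (a + b l)) * ∏ l ∈ s, (a - b l) = ∏ l ∈ s, (a ^ 2 - b l ^ 2) := by
  rw [← Finset.prod_mul_distrib]
  exact Finset.prod_congr rfl fun l _ => by ring

theorem LinearMap.mulLeft_mul_algEquiv_mul_mulLeft_mul_algEquiv {R A : Type*} [CommSemiring R]
    [Semiring A] [Algebra R A] (σ τ : A ≃ₐ[R] A) (hστ : ∀ x, σ (τ x) = x) (a b : A) :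
    LinearMap.mulLeft R a * σ.toLinearMap * (LinearMap.mulLeft R b * τ.toLinearMap) =
      LinearMap.mulLeft R (a * σ b) := by
  ext x
  simp [hστ, mul_assoc]

namespace GF

variable {n : ℕ} {m lam : ℕ → ℕ}

theorem algebraMap_X_gam (i : Fin (n + 1)) (k : Fin (m i)) :
    algebraMap (MvPolynomial (GVar n m lam) ℂ) (GF n m lam)
      (MvPolynomial.X (Sum.inr (Sum.inl ⟨i, k⟩))) = gam n m lam i (k + 1) := by
  rw [gam, dif_pos ⟨i.isLt, by simp⟩]
  simp

theorem algebraMap_X_rv (i : Fin (n + 1)) (t : Fin (lam i)) :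
    algebraMap (MvPolynomial (GVar n m lam) ℂ) (GF n m lam)
      (MvPolynomial.X (Sum.inr (Sum.inr ⟨i, t⟩))) = rv n m lam i (t + 1) := by
  rw [rv, dif_pos ⟨i.isLt, by simp⟩]
  simp

/-- The `γ` indeterminates are indexed by `i ≤ n`; `m 0 = m n = 0` leaves only `1 ≤ i ≤ n - 1`. -/
theorem algHom_ext {B : Type*} [Semiring B] [Algebra ℂ B] (hm0 : m 0 = 0) (hmn : m n = 0)
    {f g : GF n m lam →ₐ[ℂ] B} (hhb : f (hb n m lam) = g (hb n m lam))
    (hrv : ∀ i t, f (rv n m lam i t) = g (rv n m lam i t))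
    (hgam : ∀ i k, 1 ≤ i → i ≤ n - 1 → 1 ≤ k → k ≤ m i →
      f (gam n m lam i k) = g (gam n m lam i k)) :
    f = g := by
  refine FractionRing.mvPolynomial_algHom_ext ?_
  rintro (⟨⟩ | ⟨⟨i, k⟩ | ⟨i, t⟩⟩)
  · exact hhb
  · have hmi : m i ≠ 0 := Fin.pos_iff_nonempty.mpr ⟨k⟩ |>.ne'
    have hi0 : (i : ℕ) ≠ 0 := fun h => hmi (by rw [h, hm0])
    have hin : (i : ℕ) ≠ n := fun h => hmi (by rw [h, hmn])
    rw [algebraMap_X_gam]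
    exact hgam _ _ (by omega) (by omega) (by omega) k.isLt
  · rw [algebraMap_X_rv]
    exact hrv _ _

structure IsSubstAt (σ : GF n m lam ≃ₐ[ℂ] GF n m lam) (i k : ℕ) (s : GF n m lam) : Prop where
  map_hb : σ (hb n m lam) = hb n m lam
  map_rv : ∀ i' t, σ (rv n m lam i' t) = rv n m lam i' t
  map_gam : ∀ i' k', 1 ≤ i' → i' ≤ n - 1 → 1 ≤ k' → k' ≤ m i' →
    σ (gam n m lam i' k') = if i' = i ∧ k' = k then s else gam n m lam i' k'

namespace IsSubstAt

variable {σ τ : GF n m lam ≃ₐ[ℂ] GF n m lam} {i k : ℕ} {s t : GF n m lam}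

theorem map_gam_self (hσ : IsSubstAt σ i k s) (hi : 1 ≤ i) (hi' : i ≤ n - 1) (hk : 1 ≤ k)
    (hk' : k ≤ m i) : σ (gam n m lam i k) = s := by
  rw [hσ.map_gam i k hi hi' hk hk', if_pos ⟨rfl, rfl⟩]

theorem map_gam_of_ne (hσ : IsSubstAt σ i k s) {i' k' : ℕ} (hi : 1 ≤ i') (hi' : i' ≤ n - 1)
    (hk : 1 ≤ k') (hk' : k' ≤ m i') (hne : ¬(i' = i ∧ k' = k)) :
    σ (gam n m lam i' k') = gam n m lam i' k' := by
  rw [hσ.map_gam i' k' hi hi' hk hk', if_neg hne]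

theorem map_RR (hσ : IsSubstAt σ i k s) (j : ℕ) (x : GF n m lam) :
    σ (RR n m lam j x) = RR n m lam j (σ x) := by
  simp only [RR, map_prod, map_sub, map_pow, hσ.map_rv]

theorem apply_apply_eq_self (hm0 : m 0 = 0) (hmn : m n = 0) (hσ : IsSubstAt σ i k s)
    (hτ : IsSubstAt τ i k t) (hσt : σ t = gam n m lam i k) (x : GF n m lam) : σ (τ x) = x := by
  have hid : (σ : GF n m lam →ₐ[ℂ] GF n m lam).comp τ = AlgHom.id ℂ _ := by
    refine algHom_ext hm0 hmn ?_ (fun i' t' => ?_) (fun i' k' hi hi' hk hk' => ?_)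
    · simp [hτ.map_hb, hσ.map_hb]
    · simp [hτ.map_rv, hσ.map_rv]
    · by_cases hik : i' = i ∧ k' = k
      · obtain ⟨rfl, rfl⟩ := hik
        simp [hτ.map_gam_self hi hi' hk hk', hσt]
      · simp [hτ.map_gam_of_ne hi hi' hk hk' hik, hσ.map_gam_of_ne hi hi' hk hk' hik]
  exact DFunLike.congr_fun hid x

theorem map_cc' (hm0 : m 0 = 0) (hσ : IsSubstAt σ i k (gam n m lam i k - hb n m lam))
    (hi : 1 ≤ i) (hi' : i ≤ n - 1) (hk : 1 ≤ k) (hk' : k ≤ m i) :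
    σ (cc' n m lam i k) =
      (RR n m lam i (gam n m lam i k) *
        ∏ l ∈ Finset.Icc 1 (m (i - 1)),
          (gam n m lam i k - gam n m lam (i - 1) l - hb n m lam / 2)) /
      (2 * (gam n m lam i k + hb n m lam / 2) *
        ∏ l ∈ (Finset.Icc 1 (m i)).erase k, (gam n m lam i k ^ 2 - xi n m lam i l ^ 2)) := by
  have hγ := hσ.map_gam_self hi hi' hk hk'
  have hξ : σ (xi n m lam i k) = gam n m lam i k := by
    rw [xi, map_add, hγ, hσ.map_hb, sub_add_cancel]
  have hprev : ∀ l ∈ Finset.Icc 1 (m (i - 1)),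
      σ (gam n m lam (i - 1) l) = gam n m lam (i - 1) l := by
    intro l hl
    rw [Finset.mem_Icc] at hl
    have hi1 : i - 1 ≠ 0 := fun h => by rw [h, hm0] at hl; omega
    exact hσ.map_gam_of_ne (by omega) (by omega) hl.1 hl.2 (by omega)
  have hsame : ∀ l ∈ (Finset.Icc 1 (m i)).erase k, σ (xi n m lam i l) = xi n m lam i l := by
    intro l hl
    rw [Finset.mem_erase, Finset.mem_Icc] at hl
    rw [xi, map_add, hσ.map_hb, hσ.map_gam_of_ne hi hi' hl.2.1 hl.2.2 (fun h => hl.1 h.2)]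
  have hden : σ (2 * (gam n m lam i k + 3 * hb n m lam / 2)) =
      2 * (gam n m lam i k + hb n m lam / 2) := by
    simp only [map_mul, map_add, map_div₀, map_ofNat, hγ, hσ.map_hb]
    ring
  have hnum : σ (∏ l ∈ Finset.Icc 1 (m (i - 1)),
      (xi n m lam i k - gam n m lam (i - 1) l - hb n m lam / 2)) =
        ∏ l ∈ Finset.Icc 1 (m (i - 1)),
          (gam n m lam i k - gam n m lam (i - 1) l - hb n m lam / 2) := by
    rw [map_prod]
    refine Finset.prod_congr rfl fun l hl => ?_
    simp only [map_sub, map_div₀, map_ofNat, hξ, hprev l hl, hσ.map_hb]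
  have hdiff : σ (∏ l ∈ (Finset.Icc 1 (m i)).erase k, (xi n m lam i k ^ 2 - xi n m lam i l ^ 2)) =
      ∏ l ∈ (Finset.Icc 1 (m i)).erase k, (gam n m lam i k ^ 2 - xi n m lam i l ^ 2) := by
    rw [map_prod]
    refine Finset.prod_congr rfl fun l hl => ?_
    simp only [map_sub, map_pow, hξ, hsame l hl]
  rw [cc', map_div₀, map_mul, map_mul, hσ.map_RR, hξ, hden, hnum, hdiff]

end IsSubstAt

theorem cc_mul_map_cc'_eq (i k : ℕ) :
    cc n m lam i k *
      ((RR n m lam i (gam n m lam i k) *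
        ∏ l ∈ Finset.Icc 1 (m (i - 1)),
          (gam n m lam i k - gam n m lam (i - 1) l - hb n m lam / 2)) /
      (2 * (gam n m lam i k + hb n m lam / 2) *
        ∏ l ∈ (Finset.Icc 1 (m i)).erase k, (gam n m lam i k ^ 2 - xi n m lam i l ^ 2))) =
      RR n m lam i (gam n m lam i k) *
          ((∏ l ∈ Finset.Icc 1 (m (i - 1)),
              (gam n m lam i k ^ 2 - (gam n m lam (i - 1) l + hb n m lam / 2) ^ 2)) *
            ∏ l ∈ Finset.Icc 1 (m (i + 1)),
              (gam n m lam i k ^ 2 - (gam n m lam (i + 1) l + hb n m lam / 2) ^ 2)) /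
        (4 * (gam n m lam i k - hb n m lam / 2) * (gam n m lam i k + hb n m lam / 2) *
          ∏ l ∈ (Finset.Icc 1 (m i)).erase k,
            ((gam n m lam i k ^ 2 - gam n m lam i l ^ 2) *
              (gam n m lam i k ^ 2 - xi n m lam i l ^ 2))) := by
  have hpair := Finset.prod_add_mul_prod_sub (Finset.Icc 1 (m (i - 1))) (gam n m lam i k)
    fun l => gam n m lam (i - 1) l + hb n m lam / 2
  simp only [← add_assoc, ← sub_sub] at hpair
  rw [cc, div_mul_div_comm, Finset.prod_mul_distrib, ← hpair]
  ring

end GF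

theorem gklo_kappa_comp_kappaP_general (n : ℕ) (m lam : ℕ → ℕ)
    (hm0 : m 0 = 0) (hmn : m n = 0)
    (σm σp : ℕ → ℕ → (GF n m lam ≃ₐ[ℂ] GF n m lam))
    (hσmh : ∀ i k, σm i k (hb n m lam) = hb n m lam)
    (hσph : ∀ i k, σp i k (hb n m lam) = hb n m lam)
    (hσmr : ∀ i k i' t, σm i k (rv n m lam i' t) = rv n m lam i' t)
    (hσpr : ∀ i k i' t, σp i k (rv n m lam i' t) = rv n m lam i' t)
    (hσmg : ∀ i k i' k', 1 ≤ i' → i' ≤ n - 1 → 1 ≤ k' → k' ≤ m i' →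
      σm i k (gam n m lam i' k') =
        if i' = i ∧ k' = k then gam n m lam i k - hb n m lam else gam n m lam i' k')
    (hσpg : ∀ i k i' k', 1 ≤ i' → i' ≤ n - 1 → 1 ≤ k' → k' ≤ m i' →
      σp i k (gam n m lam i' k') =
        if i' = i ∧ k' = k then gam n m lam i k + hb n m lam else gam n m lam i' k')
    (i k : ℕ) (hi : 1 ≤ i) (hi' : i ≤ n - 1) (hk : 1 ≤ k) (hk' : k ≤ m i) :
    kap n m lam σm i k * kap' n m lam σp i k =
      Mop n m lam
        (RR n m lam i (gam n m lam i k) *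
            ((∏ l ∈ Finset.Icc 1 (m (i - 1)),
                (gam n m lam i k ^ 2 - (gam n m lam (i - 1) l + hb n m lam / 2) ^ 2)) *
              ∏ l ∈ Finset.Icc 1 (m (i + 1)),
                (gam n m lam i k ^ 2 - (gam n m lam (i + 1) l + hb n m lam / 2) ^ 2)) /
          (4 * (gam n m lam i k - hb n m lam / 2) * (gam n m lam i k + hb n m lam / 2) *
            ∏ l ∈ (Finset.Icc 1 (m i)).erase k,
              ((gam n m lam i k ^ 2 - gam n m lam i l ^ 2) *
                (gam n m lam i k ^ 2 - xi n m lam i l ^ 2)))) := by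
  have hσ : GF.IsSubstAt (σm i k) i k (gam n m lam i k - hb n m lam) :=
    ⟨hσmh i k, hσmr i k, hσmg i k⟩
  have hτ : GF.IsSubstAt (σp i k) i k (gam n m lam i k + hb n m lam) :=
    ⟨hσph i k, hσpr i k, hσpg i k⟩
  have hστ := hσ.apply_apply_eq_self hm0 hmn hτ <| by
    rw [map_add, hσ.map_gam_self hi hi' hk hk', hσ.map_hb, sub_add_cancel]
  unfold kap kap' Mop
  rw [LinearMap.mulLeft_mul_algEquiv_mul_mulLeft_mul_algEquiv _ _ hστ,
    hσ.map_cc' hm0 hi hi' hk hk', GF.cc_mul_map_cc'_eq]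

theorem gklo_kappa_comp_kappaP (n : ℕ) (hn : 2 ≤ n) (m lam : ℕ → ℕ)
    (hm0 : m 0 = 0) (hmn : m n = 0) (hlam0 : lam 0 = 0) (hlamn : lam n = 0)
    (σm σp : ℕ → ℕ → (GF n m lam ≃ₐ[ℂ] GF n m lam))
    (hσmh : ∀ i k, σm i k (hb n m lam) = hb n m lam)
    (hσph : ∀ i k, σp i k (hb n m lam) = hb n m lam)
    (hσmr : ∀ i k i' t, σm i k (rv n m lam i' t) = rv n m lam i' t)
    (hσpr : ∀ i k i' t, σp i k (rv n m lam i' t) = rv n m lam i' t)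
    (hσmg : ∀ i k i' k', 1 ≤ i' → i' ≤ n - 1 → 1 ≤ k' → k' ≤ m i' →
      σm i k (gam n m lam i' k') =
        if i' = i ∧ k' = k then gam n m lam i k - hb n m lam else gam n m lam i' k')
    (hσpg : ∀ i k i' k', 1 ≤ i' → i' ≤ n - 1 → 1 ≤ k' → k' ≤ m i' →
      σp i k (gam n m lam i' k') =
        if i' = i ∧ k' = k then gam n m lam i k + hb n m lam else gam n m lam i' k')
    (i k : ℕ) (hi : 1 ≤ i) (hi' : i ≤ n - 1) (hk : 1 ≤ k) (hk' : k ≤ m i) :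
    kap n m lam σm i k * kap' n m lam σp i k =
      Mop n m lam
        (RR n m lam i (gam n m lam i k) *
            ((∏ l ∈ Finset.Icc 1 (m (i - 1)),
                (gam n m lam i k ^ 2 - (gam n m lam (i - 1) l + hb n m lam / 2) ^ 2)) *
              ∏ l ∈ Finset.Icc 1 (m (i + 1)),
                (gam n m lam i k ^ 2 - (gam n m lam (i + 1) l + hb n m lam / 2) ^ 2)) /
          (4 * (gam n m lam i k - hb n m lam / 2) * (gam n m lam i k + hb n m lam / 2) *
            ∏ l ∈ (Finset.Icc 1 (m i)).erase k,
              ((gam n m lam i k ^ 2 - gam n m lam i l ^ 2) *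
                (gam n m lam i k ^ 2 - xi n m lam i l ^ 2)))) :=
  gklo_kappa_comp_kappaP_general n m lam hm0 hmn σm σp hσmh hσph hσmr hσpr hσmg hσpg i k hi hi' hk
    hk'
end
end

section
/- With the twisted GKLO operators as in the context: suppose i and i+1 both lie in I, let 1 ≤ k ≤ m_i and 1 ≤ p ≤ m_{i+1}. Then, writing [A,B] = A∘B − B∘A for the commutator of endomorphisms, the following identity of ℂ-linear endomorphisms of F holds: [κ_{i,k}, [κ_{i,k}, κ'_{i+1,p}]] = 0. -/
/- Twisted GKLO representation setup (type AI).
   Indices: `i ∈ I = {1,…,n−1}`, `1 ≤ k ≤ m i`, with conventions `m 0 = m n = 0`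
   (and `lam 0 = lam n = 0`), so that the indeterminates are exactly
   `ℏ`, `γ_{i,k}` (`i ∈ I`, `1 ≤ k ≤ m i`), `r_{i,t}` (`i ∈ I`, `1 ≤ t ≤ lam i`). -/

noncomputable section

lemma frac_algHom_ext {vars : Type} (f g : FractionRing (MvPolynomial vars ℂ) →ₐ[ℂ]
      FractionRing (MvPolynomial vars ℂ))
    (h : ∀ v, f (algebraMap (MvPolynomial vars ℂ) (FractionRing (MvPolynomial vars ℂ))
        (MvPolynomial.X v)) =
      g (algebraMap (MvPolynomial vars ℂ) (FractionRing (MvPolynomial vars ℂ))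
        (MvPolynomial.X v))) : f = g := by
  have h2 : f.comp (IsScalarTower.toAlgHom ℂ (MvPolynomial vars ℂ)
        (FractionRing (MvPolynomial vars ℂ))) =
      g.comp (IsScalarTower.toAlgHom ℂ (MvPolynomial vars ℂ)
        (FractionRing (MvPolynomial vars ℂ))) := by
    apply MvPolynomial.algHom_ext
    intro v
    simpa using h v
  have h3 : f.toRingHom = g.toRingHom := by
    apply IsLocalization.ringHom_ext (nonZeroDivisors (MvPolynomial vars ℂ))
    exact congrArg AlgHom.toRingHom h2
  refine AlgHom.ext (fun x => ?_)
  exact RingHom.congr_fun h3 x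
set_option maxHeartbeats 2000000 in
theorem gklo_serre_vanishing (n : ℕ) (hn : 2 ≤ n) (m lam : ℕ → ℕ)
    (hm0 : m 0 = 0) (hmn : m n = 0) (hlam0 : lam 0 = 0) (hlamn : lam n = 0)
    (σm σp : ℕ → ℕ → (GF n m lam ≃ₐ[ℂ] GF n m lam))
    (hσmh : ∀ i k, σm i k (hb n m lam) = hb n m lam)
    (hσph : ∀ i k, σp i k (hb n m lam) = hb n m lam)
    (hσmr : ∀ i k i' t, σm i k (rv n m lam i' t) = rv n m lam i' t)
    (hσpr : ∀ i k i' t, σp i k (rv n m lam i' t) = rv n m lam i' t)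
    (hσmg : ∀ i k i' k', 1 ≤ i' → i' ≤ n - 1 → 1 ≤ k' → k' ≤ m i' →
      σm i k (gam n m lam i' k') =
        if i' = i ∧ k' = k then gam n m lam i k - hb n m lam else gam n m lam i' k')
    (hσpg : ∀ i k i' k', 1 ≤ i' → i' ≤ n - 1 → 1 ≤ k' → k' ≤ m i' →
      σp i k (gam n m lam i' k') =
        if i' = i ∧ k' = k then gam n m lam i k + hb n m lam else gam n m lam i' k')
    (i k p : ℕ)
    (hi : 1 ≤ i) (hi1 : i + 1 ≤ n - 1) (hk : 1 ≤ k) (hk' : k ≤ m i)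
    (hp : 1 ≤ p) (hp' : p ≤ m (i + 1)) :
    kap n m lam σm i k *
          (kap n m lam σm i k * kap' n m lam σp (i + 1) p -
            kap' n m lam σp (i + 1) p * kap n m lam σm i k) -
        (kap n m lam σm i k * kap' n m lam σp (i + 1) p -
            kap' n m lam σp (i + 1) p * kap n m lam σm i k) *
          kap n m lam σm i k = 0 := by
  have hin : i ≤ n - 1 := by omega
  -- values of the automorphisms on the atoms
  have σh : σm i k (hb n m lam) = hb n m lam := hσmh i k
  have τh : σp (i + 1) p (hb n m lam) = hb n m lam := hσph (i + 1) p
  have σg : σm i k (gam n m lam i k) = gam n m lam i k - hb n m lam := by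
    rw [hσmg i k i k hi hin hk hk', if_pos ⟨rfl, rfl⟩]
  have τg : σp (i + 1) p (gam n m lam i k) = gam n m lam i k := by
    rw [hσpg (i + 1) p i k hi hin hk hk', if_neg (by omega)]
  have σd : σm i k (gam n m lam (i + 1) p) = gam n m lam (i + 1) p := by
    rw [hσmg i k (i + 1) p (by omega) hi1 hp hp', if_neg (by omega)]
  have τd : σp (i + 1) p (gam n m lam (i + 1) p) =
      gam n m lam (i + 1) p + hb n m lam := by
    rw [hσpg (i + 1) p (i + 1) p (by omega) hi1 hp hp', if_pos ⟨rfl, rfl⟩]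
  -- fixed variables
  have fixPσ : ∀ l ∈ (Finset.Icc 1 (m (i + 1))).erase p,
      σm i k (gam n m lam (i + 1) l) = gam n m lam (i + 1) l := by
    intro l hl
    have hl' := Finset.mem_Icc.mp (Finset.mem_of_mem_erase hl)
    rw [hσmg i k (i + 1) l (by omega) hi1 hl'.1 hl'.2, if_neg (by omega)]
  have fixPτ : ∀ l ∈ (Finset.Icc 1 (m (i + 1))).erase p,
      σp (i + 1) p (gam n m lam (i + 1) l) = gam n m lam (i + 1) l := by
    intro l hl
    have hlp := Finset.ne_of_mem_erase hl
    have hl' := Finset.mem_Icc.mp (Finset.mem_of_mem_erase hl)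
    rw [hσpg (i + 1) p (i + 1) l (by omega) hi1 hl'.1 hl'.2,
      if_neg (fun hcon => hlp hcon.2)]
  have hMpos : ∀ l ∈ Finset.Icc 1 (m (i - 1)), 1 ≤ i - 1 := by
    intro l hl
    have hl' := Finset.mem_Icc.mp hl
    by_contra hcon
    have h0 : i - 1 = 0 := by omega
    rw [h0, hm0] at hl'
    omega
  have fixMσ : ∀ l ∈ Finset.Icc 1 (m (i - 1)),
      σm i k (gam n m lam (i - 1) l) = gam n m lam (i - 1) l := by
    intro l hl
    have hl' := Finset.mem_Icc.mp hl
    have h1 := hMpos l hl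
    rw [hσmg i k (i - 1) l h1 (by omega) hl'.1 hl'.2, if_neg (by omega)]
  have fixMτ : ∀ l ∈ Finset.Icc 1 (m (i - 1)),
      σp (i + 1) p (gam n m lam (i - 1) l) = gam n m lam (i - 1) l := by
    intro l hl
    have hl' := Finset.mem_Icc.mp hl
    have h1 := hMpos l hl
    rw [hσpg (i + 1) p (i - 1) l h1 (by omega) hl'.1 hl'.2, if_neg (by omega)]
  have fixIσ : ∀ l ∈ (Finset.Icc 1 (m i)).erase k,
      σm i k (gam n m lam i l) = gam n m lam i l := by
    intro l hl
    have hlk := Finset.ne_of_mem_erase hl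
    have hl' := Finset.mem_Icc.mp (Finset.mem_of_mem_erase hl)
    rw [hσmg i k i l hi hin hl'.1 hl'.2, if_neg (fun hcon => hlk hcon.2)]
  have fixIτ : ∀ l ∈ (Finset.Icc 1 (m i)).erase k,
      σp (i + 1) p (gam n m lam i l) = gam n m lam i l := by
    intro l hl
    have hl' := Finset.mem_Icc.mp (Finset.mem_of_mem_erase hl)
    rw [hσpg (i + 1) p i l hi hin hl'.1 hl'.2, if_neg (by omega)]
  have hpmem : p ∈ Finset.Icc 1 (m (i + 1)) := Finset.mem_Icc.mpr ⟨hp, hp'⟩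
  have hkmem : k ∈ Finset.Icc 1 (m i) := Finset.mem_Icc.mpr ⟨hk, hk'⟩
  -- commutation of the two automorphisms
  have hcomm : ∀ x : GF n m lam,
      σm i k (σp (i + 1) p x) = σp (i + 1) p (σm i k x) := by
    have hh : ((σm i k).toAlgHom.comp ((σp (i + 1) p).toAlgHom)) =
        ((σp (i + 1) p).toAlgHom.comp ((σm i k).toAlgHom)) := by
      apply frac_algHom_ext
      rintro (⟨⟩ | ⟨iF, kF⟩ | ⟨iF, tF⟩)
      · have hXh : (algebraMap (MvPolynomial (GVar n m lam) ℂ) (GF n m lam))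
            (MvPolynomial.X (Sum.inl ())) = hb n m lam := rfl
        simp only [AlgHom.comp_apply, AlgEquiv.toAlgHom_eq_coe, AlgHom.coe_coe, AlgEquiv.coe_algHom,
          hXh, σh, τh]
      · have hmpos : 0 < m iF.val := Nat.lt_of_le_of_lt (Nat.zero_le _) kF.isLt
        have hiF1 : 1 ≤ iF.val := by
          by_contra hcon
          have h0 : iF.val = 0 := by omega
          rw [h0, hm0] at hmpos
          omega
        have hiFn : iF.val ≤ n - 1 := by
          have hlt := iF.isLt
          by_contra hcon
          have h0 : iF.val = n := by omega
          rw [h0, hmn] at hmpos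
          omega
        have hkb2 : kF.val + 1 ≤ m iF.val := kF.isLt
        have hXg : (algebraMap (MvPolynomial (GVar n m lam) ℂ) (GF n m lam))
            (MvPolynomial.X (Sum.inr (Sum.inl ⟨iF, kF⟩))) =
            gam n m lam iF.val (kF.val + 1) := by
          unfold gam
          rw [dif_pos ⟨iF.isLt, by simpa using kF.isLt⟩]
          congr 1
        simp only [AlgHom.comp_apply, AlgEquiv.toAlgHom_eq_coe, AlgHom.coe_coe, AlgEquiv.coe_algHom, hXg]
        rw [hσpg (i + 1) p iF.val (kF.val + 1) hiF1 hiFn (by omega) hkb2]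
        by_cases hc : iF.val = i + 1 ∧ kF.val + 1 = p
        · rw [if_pos hc, map_add, σd, σh,
            hσmg i k iF.val (kF.val + 1) hiF1 hiFn (by omega) hkb2, if_neg (by omega),
            hσpg (i + 1) p iF.val (kF.val + 1) hiF1 hiFn (by omega) hkb2, if_pos hc]
        · rw [if_neg hc]
          by_cases hc2 : iF.val = i ∧ kF.val + 1 = k
          · rw [hσmg i k iF.val (kF.val + 1) hiF1 hiFn (by omega) hkb2, if_pos hc2,
              map_sub, τg, τh]
          · rw [hσmg i k iF.val (kF.val + 1) hiF1 hiFn (by omega) hkb2, if_neg hc2,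
              hσpg (i + 1) p iF.val (kF.val + 1) hiF1 hiFn (by omega) hkb2, if_neg hc]
      · have hXr : (algebraMap (MvPolynomial (GVar n m lam) ℂ) (GF n m lam))
            (MvPolynomial.X (Sum.inr (Sum.inr ⟨iF, tF⟩))) =
            rv n m lam iF.val (tF.val + 1) := by
          unfold rv
          rw [dif_pos ⟨iF.isLt, by simpa using tF.isLt⟩]
          congr 1
        simp only [AlgHom.comp_apply, AlgEquiv.toAlgHom_eq_coe, AlgHom.coe_coe, AlgEquiv.coe_algHom, hXr,
          hσmr, hσpr]
    intro x
    exact DFunLike.congr_fun hh x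
  -- the reduced coefficients
  set U : GF n m lam :=
      (∏ l ∈ (Finset.Icc 1 (m (i + 1))).erase p,
          (gam n m lam i k ^ 2 - (gam n m lam (i + 1) l + hb n m lam / 2) ^ 2)) *
        (∏ l ∈ Finset.Icc 1 (m (i - 1)),
          (gam n m lam i k + gam n m lam (i - 1) l + hb n m lam / 2)) /
      (2 * (gam n m lam i k - hb n m lam / 2) *
        ∏ l ∈ (Finset.Icc 1 (m i)).erase k,
          (gam n m lam i k ^ 2 - gam n m lam i l ^ 2)) with hU
  set V : GF n m lam :=
      (∏ l ∈ (Finset.Icc 1 (m (i + 1))).erase p,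
          ((gam n m lam i k - hb n m lam) ^ 2 -
            (gam n m lam (i + 1) l + hb n m lam / 2) ^ 2)) *
        (∏ l ∈ Finset.Icc 1 (m (i - 1)),
          (gam n m lam i k - hb n m lam + gam n m lam (i - 1) l + hb n m lam / 2)) /
      (2 * (gam n m lam i k - hb n m lam - hb n m lam / 2) *
        ∏ l ∈ (Finset.Icc 1 (m i)).erase k,
          ((gam n m lam i k - hb n m lam) ^ 2 - gam n m lam i l ^ 2)) with hV
  set W : GF n m lam :=
      (∏ t ∈ Finset.Icc 1 (lam (i + 1)),
          ((gam n m lam (i + 1) p + hb n m lam) ^ 2 - rv n m lam (i + 1) t ^ 2)) *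
        (∏ l ∈ (Finset.Icc 1 (m i)).erase k,
          (gam n m lam (i + 1) p + hb n m lam - gam n m lam i l - hb n m lam / 2)) /
      (2 * (gam n m lam (i + 1) p + 3 * hb n m lam / 2) *
        ∏ l ∈ (Finset.Icc 1 (m (i + 1))).erase p,
          ((gam n m lam (i + 1) p + hb n m lam) ^ 2 -
            (gam n m lam (i + 1) l + hb n m lam) ^ 2)) with hW
  -- factorizations of the coefficients
  have ha0 : cc n m lam i k =
      (gam n m lam i k ^ 2 - (gam n m lam (i + 1) p + hb n m lam / 2) ^ 2) * U := by
    rw [hU]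
    unfold cc
    rw [← Finset.mul_prod_erase _ _ hpmem]
    ring
  have hb0 : cc' n m lam (i + 1) p =
      (gam n m lam (i + 1) p + hb n m lam - gam n m lam i k - hb n m lam / 2) * W := by
    rw [hW]
    unfold cc' RR xi
    simp only [Nat.add_sub_cancel]
    rw [← Finset.mul_prod_erase _ _ hkmem]
    ring
  -- action of the automorphisms on the products
  have eσ1 : σm i k (∏ l ∈ (Finset.Icc 1 (m (i + 1))).erase p,
      (gam n m lam i k ^ 2 - (gam n m lam (i + 1) l + hb n m lam / 2) ^ 2)) =
      ∏ l ∈ (Finset.Icc 1 (m (i + 1))).erase p,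
      ((gam n m lam i k - hb n m lam) ^ 2 -
        (gam n m lam (i + 1) l + hb n m lam / 2) ^ 2) := by
    rw [map_prod]
    exact Finset.prod_congr rfl fun l hl => by
      simp only [map_sub, map_add, map_pow, map_div₀, map_ofNat, σg, σh, fixPσ l hl]
  have eσ2 : σm i k (∏ l ∈ Finset.Icc 1 (m (i - 1)),
      (gam n m lam i k + gam n m lam (i - 1) l + hb n m lam / 2)) =
      ∏ l ∈ Finset.Icc 1 (m (i - 1)),
      (gam n m lam i k - hb n m lam + gam n m lam (i - 1) l + hb n m lam / 2) := by
    rw [map_prod]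
    exact Finset.prod_congr rfl fun l hl => by
      simp only [map_add, map_div₀, map_ofNat, σg, σh, fixMσ l hl]
  have eσ3 : σm i k (∏ l ∈ (Finset.Icc 1 (m i)).erase k,
      (gam n m lam i k ^ 2 - gam n m lam i l ^ 2)) =
      ∏ l ∈ (Finset.Icc 1 (m i)).erase k,
      ((gam n m lam i k - hb n m lam) ^ 2 - gam n m lam i l ^ 2) := by
    rw [map_prod]
    exact Finset.prod_congr rfl fun l hl => by
      simp only [map_sub, map_pow, σg, fixIσ l hl]
  have eτ1 : σp (i + 1) p (∏ l ∈ (Finset.Icc 1 (m (i + 1))).erase p,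
      (gam n m lam i k ^ 2 - (gam n m lam (i + 1) l + hb n m lam / 2) ^ 2)) =
      ∏ l ∈ (Finset.Icc 1 (m (i + 1))).erase p,
      (gam n m lam i k ^ 2 - (gam n m lam (i + 1) l + hb n m lam / 2) ^ 2) := by
    rw [map_prod]
    exact Finset.prod_congr rfl fun l hl => by
      simp only [map_sub, map_add, map_pow, map_div₀, map_ofNat, τg, τh, fixPτ l hl]
  have eτ2 : σp (i + 1) p (∏ l ∈ Finset.Icc 1 (m (i - 1)),
      (gam n m lam i k + gam n m lam (i - 1) l + hb n m lam / 2)) =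
      ∏ l ∈ Finset.Icc 1 (m (i - 1)),
      (gam n m lam i k + gam n m lam (i - 1) l + hb n m lam / 2) := by
    rw [map_prod]
    exact Finset.prod_congr rfl fun l hl => by
      simp only [map_add, map_div₀, map_ofNat, τg, τh, fixMτ l hl]
  have eτ3 : σp (i + 1) p (∏ l ∈ (Finset.Icc 1 (m i)).erase k,
      (gam n m lam i k ^ 2 - gam n m lam i l ^ 2)) =
      ∏ l ∈ (Finset.Icc 1 (m i)).erase k,
      (gam n m lam i k ^ 2 - gam n m lam i l ^ 2) := by
    rw [map_prod]
    exact Finset.prod_congr rfl fun l hl => by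
      simp only [map_sub, map_pow, τg, fixIτ l hl]
  have ew1 : σm i k (∏ t ∈ Finset.Icc 1 (lam (i + 1)),
      ((gam n m lam (i + 1) p + hb n m lam) ^ 2 - rv n m lam (i + 1) t ^ 2)) =
      ∏ t ∈ Finset.Icc 1 (lam (i + 1)),
      ((gam n m lam (i + 1) p + hb n m lam) ^ 2 - rv n m lam (i + 1) t ^ 2) := by
    rw [map_prod]
    exact Finset.prod_congr rfl fun t ht => by
      simp only [map_sub, map_add, map_pow, σd, σh, hσmr]
  have ew2 : σm i k (∏ l ∈ (Finset.Icc 1 (m i)).erase k,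
      (gam n m lam (i + 1) p + hb n m lam - gam n m lam i l - hb n m lam / 2)) =
      ∏ l ∈ (Finset.Icc 1 (m i)).erase k,
      (gam n m lam (i + 1) p + hb n m lam - gam n m lam i l - hb n m lam / 2) := by
    rw [map_prod]
    exact Finset.prod_congr rfl fun l hl => by
      simp only [map_sub, map_add, map_div₀, map_ofNat, σd, σh, fixIσ l hl]
  have ew3 : σm i k (∏ l ∈ (Finset.Icc 1 (m (i + 1))).erase p,
      ((gam n m lam (i + 1) p + hb n m lam) ^ 2 -
        (gam n m lam (i + 1) l + hb n m lam) ^ 2)) =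
      ∏ l ∈ (Finset.Icc 1 (m (i + 1))).erase p,
      ((gam n m lam (i + 1) p + hb n m lam) ^ 2 -
        (gam n m lam (i + 1) l + hb n m lam) ^ 2) := by
    rw [map_prod]
    exact Finset.prod_congr rfl fun l hl => by
      simp only [map_sub, map_add, map_pow, σd, σh, fixPσ l hl]
  -- action on the reduced coefficients
  have hσU : σm i k U = V := by
    rw [hU, hV]
    simp only [map_div₀, map_mul, map_sub, map_add, map_pow, map_ofNat, σg, σh,
      eσ1, eσ2, eσ3]
  have hτU : σp (i + 1) p U = U := by
    rw [hU]
    simp only [map_div₀, map_mul, map_sub, map_add, map_pow, map_ofNat, τg, τh,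
      eτ1, eτ2, eτ3]
  have hσW : σm i k W = W := by
    rw [hW]
    simp only [map_div₀, map_mul, map_sub, map_add, map_pow, map_ofNat, σd, σh,
      ew1, ew2, ew3]
  -- the seven values
  have hτa : σp (i + 1) p (cc n m lam i k) =
      (gam n m lam i k ^ 2 -
        (gam n m lam (i + 1) p + hb n m lam + hb n m lam / 2) ^ 2) * U := by
    rw [ha0, map_mul, hτU]
    simp only [map_sub, map_add, map_pow, map_div₀, map_ofNat, τg, τd, τh]
  have hσa : σm i k (cc n m lam i k) =
      ((gam n m lam i k - hb n m lam) ^ 2 -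
        (gam n m lam (i + 1) p + hb n m lam / 2) ^ 2) * V := by
    rw [ha0, map_mul, hσU]
    simp only [map_sub, map_add, map_pow, map_div₀, map_ofNat, σg, σd, σh]
  have hστa : σm i k (σp (i + 1) p (cc n m lam i k)) =
      ((gam n m lam i k - hb n m lam) ^ 2 -
        (gam n m lam (i + 1) p + hb n m lam + hb n m lam / 2) ^ 2) * V := by
    rw [hτa, map_mul, hσU]
    simp only [map_sub, map_add, map_pow, map_div₀, map_ofNat, σg, σd, σh]
  have hσb : σm i k (cc' n m lam (i + 1) p) =
      (gam n m lam (i + 1) p + hb n m lam - (gam n m lam i k - hb n m lam) -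
        hb n m lam / 2) * W := by
    rw [hb0, map_mul, hσW]
    simp only [map_sub, map_add, map_div₀, map_ofNat, σg, σd, σh]
  have hσσb : σm i k (σm i k (cc' n m lam (i + 1) p)) =
      (gam n m lam (i + 1) p + hb n m lam -
        (gam n m lam i k - hb n m lam - hb n m lam) - hb n m lam / 2) * W := by
    rw [hσb, map_mul, hσW]
    simp only [map_sub, map_add, map_div₀, map_ofNat, σg, σd, σh]
  -- now the operator identity, pointwise
  apply LinearMap.ext
  intro x
  simp only [kap, kap', Mop, LinearMap.sub_apply, Module.End.mul_apply,
    LinearMap.mulLeft_apply, AlgEquiv.toLinearMap_apply, LinearMap.zero_apply,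
    map_mul, map_sub]
  have hc1 : σm i k (σp (i + 1) p (σm i k x)) =
      σm i k (σm i k (σp (i + 1) p x)) := congrArg _ (hcomm x).symm
  have hc2 : σp (i + 1) p (σm i k (σm i k x)) =
      σm i k (σm i k (σp (i + 1) p x)) := by
    rw [← hcomm (σm i k x), ← hcomm x]
  have hc3 : σp (i + 1) p (σm i k (cc n m lam i k)) =
      σm i k (σp (i + 1) p (cc n m lam i k)) := (hcomm _).symm
  rw [hc1, hc2, hc3, hσσb, hστa, hσa, hσb, hτa, hb0, ha0]
  ring
end
end
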